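/- arXiv:1211.2463 — 5 statements merged into one kernel-verified Lean document; each statement's English description precedes it below -/
import Mathlib

section
/- Let 1 < α < 5 and let w be a Lane-Emden enthalpy profile. For every integer k ≥ 1 and every r with 0 < r < R one has the identity r·(∂_r^{2k} w)(r) + 2k·(∂_r^{2k−1} w)(r) + 𝔠·∂_r^{2k−2}(s ↦ s·w(s)^α)(r) = 0. Moreover the functions r ↦ ∂_r^{2k−2}(s ↦ s·w(s)^α)(r) and r ↦ ∂_r^{2k}(s ↦ s·w(s)^α)(r) vanish at r = 0, and (∂_r^{2k−1} w)(0) = 0. -/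
open MeasureTheory Real Filter Set
open scoped Topology ContDiff

lemma LE_natlt (m : ℕ) : (m : WithTop ℕ∞) < ∞ := by exact_mod_cast WithTop.coe_lt_top m

lemma LE_iteratedDerivWithin_of_mem_nhds {f : ℝ → ℝ} {s : Set ℝ} {x : ℝ} (h : s ∈ 𝓝 x) (n : ℕ) :
    iteratedDerivWithin n f s x = iteratedDeriv n f x := by
  have h1 : iteratedFDerivWithin ℝ n f (univ ∩ s) x = iteratedFDerivWithin ℝ n f univ x :=
    iteratedFDerivWithin_inter h
  rw [univ_inter] at h1
  rw [iteratedDerivWithin_eq_iteratedFDerivWithin, iteratedDeriv_eq_iteratedFDeriv,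
    ← iteratedFDerivWithin_univ, h1]

/-- Leibniz rule for multiplication by the identity, within-version. -/
lemma LE_itD_id_mul {R : ℝ} {f : ℝ → ℝ} (hf : ContDiffOn ℝ ∞ f (Ico 0 R)) (n : ℕ) :
    ∀ x ∈ Ico (0:ℝ) R, iteratedDerivWithin (n + 1) (fun s => s * f s) (Ico 0 R) x
      = x * iteratedDerivWithin (n + 1) f (Ico 0 R) x
        + (n + 1 : ℝ) * iteratedDerivWithin n f (Ico 0 R) x := by
  have hU : UniqueDiffOn ℝ (Ico (0:ℝ) R) := uniqueDiffOn_Ico 0 R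
  have hdiff : ∀ m : ℕ, DifferentiableOn ℝ (iteratedDerivWithin m f (Ico 0 R)) (Ico 0 R) :=
    fun m => hf.differentiableOn_iteratedDerivWithin (LE_natlt m) hU
  have hid : ∀ x : ℝ, DifferentiableWithinAt ℝ (fun y : ℝ => y) (Ico 0 R) x :=
    fun x => differentiableWithinAt_id
  induction n with
  | zero =>
    intro x hx
    rw [iteratedDerivWithin_one,
      iteratedDerivWithin_one, iteratedDerivWithin_zero,
      derivWithin_fun_mul (hid x)
        ((hf x hx).differentiableWithinAt (by norm_num)),
      show derivWithin (fun y : ℝ => y) (Ico 0 R) x = 1 from derivWithin_id x _ (hU.uniqueDiffWithinAt hx)]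
    ring
  | succ n IH =>
    intro x hx
    rw [iteratedDerivWithin_succ]
    have hcongr : Set.EqOn (iteratedDerivWithin (n + 1) (fun s => s * f s) (Ico 0 R))
        (fun y => y * iteratedDerivWithin (n + 1) f (Ico 0 R) y
          + (n + 1 : ℝ) * iteratedDerivWithin n f (Ico 0 R) y) (Ico 0 R) := fun y hy => IH y hy
    rw [derivWithin_congr hcongr (hcongr hx)]
    have h1 : DifferentiableWithinAt ℝ
        (fun y => y * iteratedDerivWithin (n + 1) f (Ico 0 R) y) (Ico 0 R) x :=
      (hid x).mul (hdiff (n+1) x hx)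
    have h2 : DifferentiableWithinAt ℝ
        (fun y => (n + 1 : ℝ) * iteratedDerivWithin n f (Ico 0 R) y) (Ico 0 R) x :=
      (hdiff n x hx).const_mul _
    rw [derivWithin_fun_add h1 h2,
      derivWithin_fun_mul (hid x) (hdiff (n+1) x hx),
      show derivWithin (fun y : ℝ => y) (Ico 0 R) x = 1 from derivWithin_id x _ (hU.uniqueDiffWithinAt hx),
      derivWithin_const_mul _ (hdiff n x hx),
      ← iteratedDerivWithin_succ,
      ← iteratedDerivWithin_succ]
    push_cast
    ring

/-- Parity rule for products: if odd-or-even within-derivatives of `f`, `g` (opposite to the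
parities `a`, `b`) vanish at `0`, then derivatives of `f * g` of parity opposite to `a + b`
vanish at `0`. -/
lemma LE_parity_mul {R : ℝ} (hR0 : (0:ℝ) ∈ Ico (0:ℝ) R) :
    ∀ n : ℕ, ∀ (f g : ℝ → ℝ) (a b : ℕ), ContDiffOn ℝ ∞ f (Ico 0 R) → ContDiffOn ℝ ∞ g (Ico 0 R) →
    (∀ j ≤ n, j % 2 ≠ a % 2 → iteratedDerivWithin j f (Ico 0 R) 0 = 0) →
    (∀ j ≤ n, j % 2 ≠ b % 2 → iteratedDerivWithin j g (Ico 0 R) 0 = 0) →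
    ∀ j ≤ n, j % 2 ≠ (a + b) % 2 →
      iteratedDerivWithin j (fun y => f y * g y) (Ico 0 R) 0 = 0 := by
  have hU : UniqueDiffOn ℝ (Ico (0:ℝ) R) := uniqueDiffOn_Ico 0 R
  intro n
  induction n with
  | zero =>
    intro f g a b hf hg haf hbg j hj hpar
    interval_cases j
    have : 0 % 2 ≠ a % 2 ∨ 0 % 2 ≠ b % 2 := by omega
    rcases this with h | h
    · simpa using mul_eq_zero_of_left (by simpa using haf 0 le_rfl h) (g 0)
    · simpa using mul_eq_zero_of_right (f 0) (by simpa using hbg 0 le_rfl h)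
  | succ n IH =>
    intro f g a b hf hg haf hbg j hj hpar
    rcases j with _ | i
    · have : 0 % 2 ≠ a % 2 ∨ 0 % 2 ≠ b % 2 := by omega
      rcases this with h | h
      · simpa using mul_eq_zero_of_left (by simpa using haf 0 (by omega) h) (g 0)
      · simpa using mul_eq_zero_of_right (f 0) (by simpa using hbg 0 (by omega) h)
    · rw [iteratedDerivWithin_succ']
      have hdmul : Set.EqOn (derivWithin (fun y => f y * g y) (Ico 0 R))
          (fun y => derivWithin f (Ico 0 R) y * g y + f y * derivWithin g (Ico 0 R) y)
          (Ico 0 R) := by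
        intro y hy
        exact derivWithin_fun_mul
          ((hf y hy).differentiableWithinAt (by norm_num))
          ((hg y hy).differentiableWithinAt (by norm_num))
      rw [iteratedDerivWithin_congr hdmul hR0]
      have hf' : ContDiffOn ℝ ∞ (derivWithin f (Ico 0 R)) (Ico 0 R) :=
        hf.derivWithin hU (by norm_num)
      have hg' : ContDiffOn ℝ ∞ (derivWithin g (Ico 0 R)) (Ico 0 R) :=
        hg.derivWithin hU (by norm_num)
      rw [show (fun y => derivWithin f (Ico 0 R) y * g y + f y * derivWithin g (Ico 0 R) y)
          = ((fun y => derivWithin f (Ico 0 R) y * g y) + fun y => f y * derivWithin g (Ico 0 R) y) from rfl,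
        iteratedDerivWithin_add hR0 hU
        (((hf'.mul hg).of_le (by exact_mod_cast le_of_lt (LE_natlt i))) 0 hR0)
        (((hf.mul hg').of_le (by exact_mod_cast le_of_lt (LE_natlt i))) 0 hR0)]
      have e1 : iteratedDerivWithin i (fun y => derivWithin f (Ico 0 R) y * g y) (Ico 0 R) 0 = 0 := by
        refine IH (derivWithin f (Ico 0 R)) g (a+1) b hf' hg ?_ (fun m hm h => hbg m (by omega) h) i (by omega) (by omega)
        intro m hm h
        rw [← iteratedDerivWithin_succ']
        exact haf (m+1) (by omega) (by omega)
      have e2 : iteratedDerivWithin i (fun y => f y * derivWithin g (Ico 0 R) y) (Ico 0 R) 0 = 0 := by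
        refine IH f (derivWithin g (Ico 0 R)) a (b+1) hf hg' (fun m hm h => haf m (by omega) h) ?_ i (by omega) (by omega)
        intro m hm h
        rw [← iteratedDerivWithin_succ']
        exact hbg (m+1) (by omega) (by omega)
      rw [e1, e2, add_zero]

/-- If the within-derivative of order `n+1` of a function smooth on `[0,R)` vanishes at `0`,
then so does the (possibly junk) global iterated derivative. -/
lemma LE_junk {R : ℝ} (hR : 0 < R) {f : ℝ → ℝ} (hf : ContDiffOn ℝ ∞ f (Ico 0 R)) (n : ℕ)
    (h0 : iteratedDerivWithin (n + 1) f (Ico 0 R) 0 = 0) :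
    iteratedDeriv (n + 1) f 0 = 0 := by
  have hU : UniqueDiffOn ℝ (Ico (0:ℝ) R) := uniqueDiffOn_Ico 0 R
  have hR0 : (0:ℝ) ∈ Ico (0:ℝ) R := ⟨le_refl _, hR⟩
  rw [iteratedDeriv_succ]
  set g := iteratedDeriv n f with hg
  by_cases hd : DifferentiableAt ℝ g 0
  swap
  · exact deriv_zero_of_not_differentiableAt hd
  have hne : (𝓝[Ioo (0:ℝ) R] 0).NeBot := by
    refine mem_closure_iff_nhdsWithin_neBot.mp ?_
    rw [closure_Ioo (ne_of_lt hR)]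
    exact ⟨le_refl _, le_of_lt hR⟩
  have hmono : 𝓝[Ioo (0:ℝ) R] 0 ≤ 𝓝[Ico 0 R] 0 := nhdsWithin_mono _ Ioo_subset_Ico_self
  have hEq : ∀ᶠ y in 𝓝[Ioo (0:ℝ) R] 0, g y = iteratedDerivWithin n f (Ico 0 R) y := by
    filter_upwards [eventually_mem_nhdsWithin] with y hy
    exact (LE_iteratedDerivWithin_of_mem_nhds (Ico_mem_nhds hy.1 hy.2) n).symm
  -- g 0 equals the within-derivative at 0
  have hcont : Tendsto (iteratedDerivWithin n f (Ico 0 R)) (𝓝[Ioo (0:ℝ) R] 0)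
      (𝓝 (iteratedDerivWithin n f (Ico 0 R) 0)) :=
    ((hf.continuousOn_iteratedDerivWithin (le_of_lt (LE_natlt n)) hU 0 hR0).mono Ioo_subset_Ico_self)
  have hgt : Tendsto g (𝓝[Ioo (0:ℝ) R] 0) (𝓝 (g 0)) :=
    (hd.continuousAt.continuousWithinAt).mono_left hmono
  have hg0 : g 0 = iteratedDerivWithin n f (Ico 0 R) 0 :=
    tendsto_nhds_unique (hgt.congr' hEq) hcont
  -- slopes
  have hs1 : Tendsto (slope g 0) (𝓝[Ioo (0:ℝ) R] 0) (𝓝 (deriv g 0)) :=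
    (hasDerivAt_iff_tendsto_slope.mp hd.hasDerivAt).mono_left
      (nhdsWithin_mono _ (fun y hy => ne_of_gt hy.1))
  have hw1 : HasDerivWithinAt (iteratedDerivWithin n f (Ico 0 R))
      (iteratedDerivWithin (n + 1) f (Ico 0 R) 0) (Ico 0 R) 0 := by
    have := ((hf.differentiableOn_iteratedDerivWithin (LE_natlt n) hU) 0 hR0).hasDerivWithinAt
    rwa [← iteratedDerivWithin_succ] at this
  have hs2 : Tendsto (slope (iteratedDerivWithin n f (Ico 0 R)) 0) (𝓝[Ioo (0:ℝ) R] 0)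
      (𝓝 (iteratedDerivWithin (n + 1) f (Ico 0 R) 0)) :=
    (hasDerivWithinAt_iff_tendsto_slope.mp hw1).mono_left
      (nhdsWithin_mono _ (fun y hy => ⟨Ioo_subset_Ico_self hy, ne_of_gt hy.1⟩))
  have hslopeEq : ∀ᶠ y in 𝓝[Ioo (0:ℝ) R] 0,
      slope g 0 y = slope (iteratedDerivWithin n f (Ico 0 R)) 0 y := by
    filter_upwards [hEq] with y hy
    rw [slope, slope, hy, hg0]
  have := tendsto_nhds_unique (hs1.congr' hslopeEq) hs2
  rw [this, h0]

/-- The key bridge: `(s*w)'' = -c * (s * w^α)` on `[0,R)` (within-derivatives). -/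
lemma LE_bridge (α c R : ℝ) (hR : 0 < R) (w : ℝ → ℝ)
    (hsm : ContDiffOn ℝ ∞ w (Ico 0 R))
    (hw_pos : ∀ r, 0 ≤ r → r < R → 0 < w r)
    (hw_ode : ∀ r, 0 < r → r < R →
      deriv (deriv w) r + (2 / r) * deriv w r + c * w r ^ α = 0) :
    Set.EqOn (iteratedDerivWithin 2 (fun s => s * w s) (Ico 0 R))
      (fun s => (-c) * (s * w s ^ α)) (Ico 0 R) := by
  have hU : UniqueDiffOn ℝ (Ico (0:ℝ) R) := uniqueDiffOn_Ico 0 R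
  have hR0 : (0:ℝ) ∈ Ico (0:ℝ) R := ⟨le_refl _, hR⟩
  have hu : ContDiffOn ℝ ∞ (fun s : ℝ => s * w s) (Ico 0 R) := contDiffOn_id.mul hsm
  have hint : ∀ x ∈ Ioo (0:ℝ) R,
      iteratedDerivWithin 2 (fun s => s * w s) (Ico 0 R) x = (-c) * (x * w x ^ α) := by
    intro x hx
    have hn : Ico (0:ℝ) R ∈ 𝓝 x := Ico_mem_nhds hx.1 hx.2
    have hL := LE_itD_id_mul hsm 1 x ⟨le_of_lt hx.1, hx.2⟩
    have e2 : iteratedDerivWithin 2 w (Ico 0 R) x = deriv (deriv w) x := by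
      rw [LE_iteratedDerivWithin_of_mem_nhds hn 2, iteratedDeriv_succ, iteratedDeriv_one]
    have e1 : iteratedDerivWithin 1 w (Ico 0 R) x = deriv w x := by
      rw [LE_iteratedDerivWithin_of_mem_nhds hn 1, iteratedDeriv_one]
    rw [show (1:ℕ)+1 = 2 from rfl] at hL
    rw [hL, e2, e1]
    have hode := hw_ode x hx.1 hx.2
    have hx0 : x ≠ 0 := ne_of_gt hx.1
    field_simp at hode
    push_cast
    linear_combination hode
  intro x hx
  rcases (lt_or_eq_of_le hx.1).symm with h0 | h0
  · -- x = 0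
    have hne : (𝓝[Ioo (0:ℝ) R] 0).NeBot := by
      refine mem_closure_iff_nhdsWithin_neBot.mp ?_
      rw [closure_Ioo (ne_of_lt hR)]
      exact ⟨le_refl _, le_of_lt hR⟩
    subst h0
    have hφ : Tendsto (iteratedDerivWithin 2 (fun s => s * w s) (Ico 0 R))
        (𝓝[Ioo (0:ℝ) R] 0)
        (𝓝 (iteratedDerivWithin 2 (fun s => s * w s) (Ico 0 R) 0)) :=
      ((hu.continuousOn_iteratedDerivWithin (le_of_lt (LE_natlt 2)) hU 0 hR0).mono
        Ioo_subset_Ico_self)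
    have hψ : Tendsto (fun s => (-c) * (s * w s ^ α)) (𝓝[Ioo (0:ℝ) R] 0)
        (𝓝 ((-c) * ((0:ℝ) * w 0 ^ α))) := by
      have : ContinuousWithinAt (fun s => (-c) * (s * w s ^ α)) (Ico 0 R) 0 :=
        (continuousWithinAt_id.mul ((hsm.continuousOn 0 hR0).rpow_const
          (Or.inl (ne_of_gt (hw_pos 0 le_rfl hR))))).const_smul (-c)
      exact this.mono Ioo_subset_Ico_self
    have hEq : ∀ᶠ y in 𝓝[Ioo (0:ℝ) R] 0,
        iteratedDerivWithin 2 (fun s => s * w s) (Ico 0 R) y = (-c) * (y * w y ^ α) := by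
      filter_upwards [eventually_mem_nhdsWithin] with y hy
      exact hint y hy
    have := tendsto_nhds_unique (hφ.congr' hEq) hψ
    rw [this]
  · exact hint x ⟨h0, hx.2⟩

/-- The iterated Lane-Emden identity, within-version. -/
lemma LE_identity_within (α c R : ℝ) (hR : 0 < R) (w : ℝ → ℝ)
    (hsm : ContDiffOn ℝ ∞ w (Ico 0 R))
    (hw_pos : ∀ r, 0 ≤ r → r < R → 0 < w r)
    (hw_ode : ∀ r, 0 < r → r < R →
      deriv (deriv w) r + (2 / r) * deriv w r + c * w r ^ α = 0)
    (m : ℕ) : ∀ x ∈ Ico (0:ℝ) R,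
      iteratedDerivWithin (2*m+2) (fun s => s * w s) (Ico 0 R) x
        = (-c) * iteratedDerivWithin (2*m) (fun s => s * w s ^ α) (Ico 0 R) x := by
  have hU : UniqueDiffOn ℝ (Ico (0:ℝ) R) := uniqueDiffOn_Ico 0 R
  have hF : ContDiffOn ℝ ∞ (fun s => w s ^ α) (Ico 0 R) :=
    hsm.rpow_const_of_ne (fun x hx => ne_of_gt (hw_pos x hx.1 hx.2))
  have hidF : ContDiffOn ℝ ∞ (fun s => s * w s ^ α) (Ico 0 R) := contDiffOn_id.mul hF
  intro x hx
  have hstep : 2*m+2 = (2*m+1)+1 := by omega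
  rw [hstep, iteratedDerivWithin_succ', iteratedDerivWithin_succ']
  have hEq : Set.EqOn
      (derivWithin (derivWithin (fun s => s * w s) (Ico 0 R)) (Ico 0 R))
      (fun s => (-c) * (s * w s ^ α)) (Ico 0 R) := by
    intro y hy
    have h2 : iteratedDerivWithin 2 (fun s => s * w s) (Ico 0 R) y
        = derivWithin (derivWithin (fun s => s * w s) (Ico 0 R)) (Ico 0 R) y := by
      rw [iteratedDerivWithin_succ]
      refine derivWithin_congr ?_ ?_
      · intro z hz; exact congrFun iteratedDerivWithin_one z
      · exact congrFun iteratedDerivWithin_one y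
    rw [← h2]
    exact LE_bridge α c R hR w hsm hw_pos hw_ode hy
  rw [iteratedDerivWithin_congr hEq hx,
    iteratedDerivWithin_const_mul hx hU (-c) (((hidF).of_le (le_of_lt (LE_natlt (2*m)))) x hx)]

/-- Master parity induction: all odd within-derivatives of `w` and of `w^β` vanish at `0`. -/
lemma LE_master (α c R : ℝ) (hR : 0 < R) (w : ℝ → ℝ)
    (hsm : ContDiffOn ℝ ∞ w (Ico 0 R))
    (hw_pos : ∀ r, 0 ≤ r → r < R → 0 < w r)
    (hw_ode : ∀ r, 0 < r → r < R →
      deriv (deriv w) r + (2 / r) * deriv w r + c * w r ^ α = 0) :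
    ∀ n : ℕ, (∀ j ≤ n, j % 2 = 1 → iteratedDerivWithin j w (Ico 0 R) 0 = 0) ∧
      (∀ β : ℝ, ∀ j ≤ n, j % 2 = 1 →
        iteratedDerivWithin j (fun s => w s ^ β) (Ico 0 R) 0 = 0) := by
  have hU : UniqueDiffOn ℝ (Ico (0:ℝ) R) := uniqueDiffOn_Ico 0 R
  have hR0 : (0:ℝ) ∈ Ico (0:ℝ) R := ⟨le_refl _, hR⟩
  have hne : ∀ x ∈ Ico (0:ℝ) R, w x ≠ 0 := fun x hx => ne_of_gt (hw_pos x hx.1 hx.2)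
  have hF : ∀ β : ℝ, ContDiffOn ℝ ∞ (fun s => w s ^ β) (Ico 0 R) :=
    fun β => hsm.rpow_const_of_ne hne
  intro n
  induction n with
  | zero => exact ⟨fun j hj hodd => by omega, fun β j hj hodd => by omega⟩
  | succ n IH =>
    have hW : ∀ j ≤ n + 1, j % 2 = 1 → iteratedDerivWithin j w (Ico 0 R) 0 = 0 := by
      intro j hj hodd
      rcases Nat.lt_or_ge j (n+1) with h | h
      · exact IH.1 j (by omega) hodd
      have hjn : j = n + 1 := by omega
      obtain ⟨m, rfl⟩ : ∃ m, j = 2*m+1 := ⟨j/2, by omega⟩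
      have hid := LE_identity_within α c R hR w hsm hw_pos hw_ode m 0 hR0
      have hL := LE_itD_id_mul hsm (2*m+1) 0 hR0
      rw [show (2*m+1)+1 = 2*m+2 from rfl] at hL
      rw [hL, zero_mul, zero_add] at hid
      have hRHS : iteratedDerivWithin (2*m) (fun s => s * w s ^ α) (Ico 0 R) 0 = 0 := by
        rcases m with _ | m'
        · simp
        · have hL2 := LE_itD_id_mul (hF α) (2*m'+1) 0 hR0
          rw [show (2*m'+1)+1 = 2*(m'+1) from by ring] at hL2
          rw [hL2, zero_mul, zero_add]
          have : iteratedDerivWithin (2*m'+1) (fun s => w s ^ α) (Ico 0 R) 0 = 0 :=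
            IH.2 α (2*m'+1) (by omega) (by omega)
          rw [this, mul_zero]
      rw [hRHS, mul_zero] at hid
      have hcoef : ((2*m+1 : ℕ) : ℝ) + 1 ≠ 0 := by positivity
      have := mul_eq_zero.mp hid
      tauto
    refine ⟨hW, ?_⟩
    intro β j hj hodd
    rcases j with _ | i
    · omega
    rw [iteratedDerivWithin_succ']
    have hEq : Set.EqOn (derivWithin (fun s => w s ^ β) (Ico 0 R))
        (fun y => β * (w y ^ (β - 1) * derivWithin w (Ico 0 R) y)) (Ico 0 R) := by
      intro y hy
      rw [derivWithin_rpow_const ((hsm y hy).differentiableWithinAt (by norm_num))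
        (Or.inl (hne y hy)) (hU.uniqueDiffWithinAt hy)]
      ring
    rw [iteratedDerivWithin_congr hEq hR0]
    have hmul : ContDiffOn ℝ ∞ (fun y => w y ^ (β - 1) * derivWithin w (Ico 0 R) y)
        (Ico 0 R) := (hF (β - 1)).mul (hsm.derivWithin hU (by norm_num))
    rw [iteratedDerivWithin_const_mul hR0 hU β ((hmul.of_le (le_of_lt (LE_natlt i))) 0 hR0)]
    have hz : iteratedDerivWithin i
        (fun y => w y ^ (β - 1) * derivWithin w (Ico 0 R) y) (Ico 0 R) 0 = 0 := by
      refine LE_parity_mul hR0 i (fun y => w y ^ (β - 1)) (derivWithin w (Ico 0 R)) 0 1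
        (hF (β - 1)) (hsm.derivWithin hU (by norm_num)) ?_ ?_ i le_rfl (by omega)
      · intro m hm hpar
        exact IH.2 (β - 1) m (by omega) (by omega)
      · intro m hm hpar
        rw [← iteratedDerivWithin_succ']
        exact hW (m+1) (by omega) (by omega)
    rw [hz, mul_zero]

/-- The iterated Lane-Emden identity
`r ∂_r^{2k} w + 2k ∂_r^{2k-1} w + 𝔠 ∂_r^{2k-2}(s ↦ s w(s)^α) = 0` on `(0,R)`,
together with vanishing at the origin of `∂_r^{2k-2}(s w^α)`, `∂_r^{2k}(s w^α)`
and `∂_r^{2k-1} w`. -/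
theorem laneEmden_iterated_identity
    (α c R : ℝ) (hα : 1 < α) (hα' : α < 5) (hc : 0 < c) (hR : 0 < R)
    (w : ℝ → ℝ)
    (hw_cont : ContinuousOn w (Set.Icc 0 R))
    (hw_smooth : ContDiffOn ℝ (⊤ : ℕ∞) w (Set.Ico 0 R))
    (hw0 : w 0 = 1) (hw'0 : deriv w 0 = 0)
    (hw_pos : ∀ r, 0 ≤ r → r < R → 0 < w r)
    (hwR : w R = 0)
    (hw_dec : ∀ r, 0 < r → r < R → deriv w r < 0)
    (hw_pv : ∃ w'R : ℝ, w'R < 0 ∧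
      Filter.Tendsto (deriv w) (nhdsWithin R (Set.Iio R)) (nhds w'R))
    (hw_ode : ∀ r, 0 < r → r < R →
      deriv (deriv w) r + (2 / r) * deriv w r + c * w r ^ α = 0)
    (k : ℕ) (hk : 1 ≤ k) :
    (∀ r, 0 < r → r < R →
        r * iteratedDeriv (2 * k) w r + (2 * k : ℝ) * iteratedDeriv (2 * k - 1) w r
          + c * iteratedDeriv (2 * k - 2) (fun s => s * w s ^ α) r = 0) ∧
    iteratedDeriv (2 * k - 2) (fun s => s * w s ^ α) 0 = 0 ∧
    iteratedDeriv (2 * k) (fun s => s * w s ^ α) 0 = 0 ∧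
    iteratedDeriv (2 * k - 1) w 0 = 0 := by
  have hU : UniqueDiffOn ℝ (Ico (0:ℝ) R) := uniqueDiffOn_Ico 0 R
  have hR0 : (0:ℝ) ∈ Ico (0:ℝ) R := ⟨le_refl _, hR⟩
  have hsm : ContDiffOn ℝ ∞ w (Ico 0 R) := hw_smooth.of_le (by simp)
  have hne : ∀ x ∈ Ico (0:ℝ) R, w x ≠ 0 := fun x hx => ne_of_gt (hw_pos x hx.1 hx.2)
  have hF : ContDiffOn ℝ ∞ (fun s => w s ^ α) (Ico 0 R) := hsm.rpow_const_of_ne hne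
  have hidF : ContDiffOn ℝ ∞ (fun s => s * w s ^ α) (Ico 0 R) := contDiffOn_id.mul hF
  have hmaster := LE_master α c R hR w hsm hw_pos hw_ode
  obtain ⟨m, rfl⟩ : ∃ m, k = m + 1 := ⟨k - 1, by omega⟩
  have e2k : 2 * (m + 1) = 2*m+2 := by ring
  rw [e2k, show 2*m+2-1 = 2*m+1 from by omega, show 2*m+2-2 = 2*m from by omega]
  refine ⟨?_, ?_, ?_, ?_⟩
  · -- the identity on (0, R)
    intro r hr hrR
    have hrS : r ∈ Ico (0:ℝ) R := ⟨le_of_lt hr, hrR⟩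
    have hn : Ico (0:ℝ) R ∈ 𝓝 r := Ico_mem_nhds hr hrR
    have hid := LE_identity_within α c R hR w hsm hw_pos hw_ode m r hrS
    have hL := LE_itD_id_mul hsm (2*m+1) r hrS
    rw [show (2*m+1)+1 = 2*m+2 from rfl] at hL
    rw [hL] at hid
    rw [← LE_iteratedDerivWithin_of_mem_nhds hn (2*m+2),
      ← LE_iteratedDerivWithin_of_mem_nhds hn (2*m+1),
      ← LE_iteratedDerivWithin_of_mem_nhds hn (2*m)]
    push_cast at hid ⊢
    linarith [hid]
  · -- vanishing of ∂^{2m} (s w^α) at 0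
    rcases m with _ | m'
    · simp
    · have h0 : iteratedDerivWithin (2*(m'+1)) (fun s => s * w s ^ α) (Ico 0 R) 0 = 0 := by
        have hL2 := LE_itD_id_mul hF (2*m'+1) 0 hR0
        rw [show (2*m'+1)+1 = 2*(m'+1) from by ring] at hL2
        rw [hL2, zero_mul, zero_add,
          (hmaster (2*m'+1)).2 α (2*m'+1) le_rfl (by omega), mul_zero]
      have := LE_junk hR hidF (2*m'+1)
        (by rwa [show (2*m'+1)+1 = 2*(m'+1) from by ring])
      rwa [show (2*m'+1)+1 = 2*(m'+1) from by ring] at this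
  · -- vanishing of ∂^{2m+2} (s w^α) at 0
    have h0 : iteratedDerivWithin (2*m+2) (fun s => s * w s ^ α) (Ico 0 R) 0 = 0 := by
      have hL2 := LE_itD_id_mul hF (2*m+1) 0 hR0
      rw [show (2*m+1)+1 = 2*m+2 from rfl] at hL2
      rw [hL2, zero_mul, zero_add,
        (hmaster (2*m+1)).2 α (2*m+1) le_rfl (by omega), mul_zero]
    have := LE_junk hR hidF (2*m+1) (by rwa [show (2*m+1)+1 = 2*m+2 from rfl])
    rwa [show (2*m+1)+1 = 2*m+2 from rfl] at this
  · -- vanishing of ∂^{2m+1} w at 0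
    have h0 : iteratedDerivWithin (2*m+1) w (Ico 0 R) 0 = 0 :=
      (hmaster (2*m+1)).1 (2*m+1) le_rfl (by omega)
    have := LE_junk hR hsm (2*m) (by rwa [show (2*m)+1 = 2*m+1 from rfl])
    rwa [show (2*m)+1 = 2*m+1 from rfl] at this
end

section
/- Let 1 < α < 5 and let w be a Lane-Emden enthalpy profile. Then for every integer i with 0 ≤ i ≤ α + 2, the derivative ∂_r^i w is uniformly bounded on (0,R); and for every integer k with 1 ≤ k ≤ 2α + 1, the function r ↦ w(r)^{(k−1)/2} · (∂_r^{k+1} w)(r) is uniformly bounded on (0,R). -/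
open MeasureTheory Real Filter Set

private lemma iterDW_open_eq {f : ℝ → ℝ} {s : Set ℝ} (hs : IsOpen s) {x : ℝ} (hx : x ∈ s)
    (n : ℕ) : iteratedDerivWithin n f s x = iteratedDeriv n f x := by
  rw [iteratedDerivWithin_eq_iteratedFDerivWithin, iteratedDeriv_eq_iteratedFDeriv,
    iteratedFDerivWithin_of_isOpen n hs hx]

private lemma contOn_iterD {f : ℝ → ℝ} {s : Set ℝ} (hs : IsOpen s) (hf : ContDiffOn ℝ (⊤ : ℕ∞) f s)
    (n : ℕ) : ContinuousOn (iteratedDeriv n f) s := by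
  have h := hf.continuousOn_iteratedDerivWithin (m := n) (by exact_mod_cast le_top) hs.uniqueDiffOn
  exact h.congr fun x hx => (iterDW_open_eq hs hx n).symm

private lemma iter_constmul {f : ℝ → ℝ} {s : Set ℝ} (hs : IsOpen s) {x : ℝ} (hx : x ∈ s)
    (hf : ContDiffOn ℝ (⊤ : ℕ∞) f s) (a : ℝ) (n : ℕ) :
    iteratedDeriv n (fun t => a * f t) x = a * iteratedDeriv n f x := by
  rw [← iterDW_open_eq hs hx n (f := fun t => a * f t),
    iteratedDerivWithin_const_mul hx hs.uniqueDiffOn a ((hf.of_le (by exact_mod_cast le_top) : ContDiffOn ℝ n f s) x hx),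
    iterDW_open_eq hs hx n]

private lemma iter_lincomb {f g : ℝ → ℝ} {s : Set ℝ} (hs : IsOpen s) {x : ℝ} (hx : x ∈ s)
    (hf : ContDiffOn ℝ (⊤ : ℕ∞) f s) (hg : ContDiffOn ℝ (⊤ : ℕ∞) g s) (a b : ℝ) (n : ℕ) :
    iteratedDeriv n (fun t => a * f t + b * g t) x
      = a * iteratedDeriv n f x + b * iteratedDeriv n g x := by
  have hf' : ContDiffOn ℝ n f s := hf.of_le (by exact_mod_cast le_top)
  have hg' : ContDiffOn ℝ n g s := hg.of_le (by exact_mod_cast le_top)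
  have h1 : iteratedDerivWithin n (fun t => a * f t + b * g t) s x
      = iteratedDerivWithin n (fun t => a * f t) s x
        + iteratedDerivWithin n (fun t => b * g t) s x :=
    iteratedDerivWithin_add hx hs.uniqueDiffOn (contDiffOn_const.mul hf' x hx)
      (contDiffOn_const.mul hg' x hx)
  rw [← iterDW_open_eq hs hx n (f := fun t => a * f t + b * g t), h1,
    iteratedDerivWithin_const_mul hx hs.uniqueDiffOn a (hf' x hx),
    iteratedDerivWithin_const_mul hx hs.uniqueDiffOn b (hg' x hx),
    iterDW_open_eq hs hx n, iterDW_open_eq hs hx n]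

private lemma abs_iterD_mul_le {f g : ℝ → ℝ} {s : Set ℝ} (hs : IsOpen s)
    (hf : ContDiffOn ℝ (⊤ : ℕ∞) f s) (hg : ContDiffOn ℝ (⊤ : ℕ∞) g s) {x : ℝ} (hx : x ∈ s) (n : ℕ) :
    |iteratedDeriv n (fun y => f y * g y) x| ≤
      ∑ i ∈ Finset.range (n + 1),
        (n.choose i : ℝ) * |iteratedDeriv i f x| * |iteratedDeriv (n - i) g x| := by
  have habs : ∀ (m : ℕ) (F : ℝ → ℝ), ‖iteratedFDerivWithin ℝ m F s x‖ = |iteratedDeriv m F x| := by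
    intro m F
    rw [iteratedFDerivWithin_of_isOpen m hs hx, norm_iteratedFDeriv_eq_norm_iteratedDeriv,
      Real.norm_eq_abs]
  have h := norm_iteratedFDerivWithin_mul_le (𝕜 := ℝ) hf hg hs.uniqueDiffOn hx (n := n) (by exact_mod_cast le_top)
  calc |iteratedDeriv n (fun y => f y * g y) x|
      = ‖iteratedFDerivWithin ℝ n (fun y => f y * g y) s x‖ := (habs _ _).symm
    _ ≤ ∑ i ∈ Finset.range (n + 1), (n.choose i : ℝ) * ‖iteratedFDerivWithin ℝ i f s x‖ *
          ‖iteratedFDerivWithin ℝ (n - i) g s x‖ := h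
    _ = _ := Finset.sum_congr rfl fun i _ => by rw [habs, habs]

private lemma exists_sum_bound {s : Finset ℕ} {Uset : Set ℝ} {f : ℕ → ℝ → ℝ} {g : ℝ → ℝ}
    (h : ∀ i ∈ s, ∃ K : ℝ, 0 ≤ K ∧ ∀ r ∈ Uset, f i r ≤ K * g r) :
    ∃ K : ℝ, 0 ≤ K ∧ ∀ r ∈ Uset, (∑ i ∈ s, f i r) ≤ K * g r := by
  classical
  choose! K hK0 hK using h
  refine ⟨∑ i ∈ s, K i, Finset.sum_nonneg fun i hi => hK0 i hi, fun r hr => ?_⟩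
  calc ∑ i ∈ s, f i r ≤ ∑ i ∈ s, K i * g r := Finset.sum_le_sum fun i hi => hK i hi r hr
    _ = (∑ i ∈ s, K i) * g r := by rw [Finset.sum_mul]

/-- For `0 ≤ i ≤ α + 2` the derivative `∂_r^i w` is uniformly bounded on
`(0,R)`, and for `1 ≤ k ≤ 2α + 1` the function `w^{(k-1)/2} ∂_r^{k+1} w` is uniformly
bounded on `(0,R)`. -/
theorem laneEmden_derivative_bounds
    (α c R : ℝ) (hα : 1 < α) (hα' : α < 5) (hc : 0 < c) (hR : 0 < R)
    (w : ℝ → ℝ)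
    (hw_cont : ContinuousOn w (Set.Icc 0 R))
    (hw_smooth : ContDiffOn ℝ (⊤ : ℕ∞) w (Set.Ico 0 R))
    (hw0 : w 0 = 1) (hw'0 : deriv w 0 = 0)
    (hw_pos : ∀ r, 0 ≤ r → r < R → 0 < w r)
    (hwR : w R = 0)
    (hw_dec : ∀ r, 0 < r → r < R → deriv w r < 0)
    (hw_pv : ∃ w'R : ℝ, w'R < 0 ∧
      Filter.Tendsto (deriv w) (nhdsWithin R (Set.Iio R)) (nhds w'R))
    (hw_ode : ∀ r, 0 < r → r < R →
      deriv (deriv w) r + (2 / r) * deriv w r + c * w r ^ α = 0) :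
    (∀ i : ℕ, (i : ℝ) ≤ α + 2 →
        ∃ M : ℝ, ∀ r ∈ Set.Ioo (0:ℝ) R, |iteratedDeriv i w r| ≤ M) ∧
    (∀ k : ℕ, 1 ≤ k → (k : ℝ) ≤ 2 * α + 1 →
        ∃ M : ℝ, ∀ r ∈ Set.Ioo (0:ℝ) R,
          |w r ^ (((k : ℝ) - 1) / 2) * iteratedDeriv (k + 1) w r| ≤ M) := by
  obtain ⟨w'R, hw'Rneg, hw'Rtend⟩ := hw_pv
  have hR2 : (0:ℝ) < R/2 := by linarith
  have hUopen : IsOpen (Ioo (R/2) R) := isOpen_Ioo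
  have hUsub : Ioo (R/2) R ⊆ Ioo 0 R := Ioo_subset_Ioo (by linarith) le_rfl
  have hOopen : IsOpen (Ioo (0:ℝ) R) := isOpen_Ioo
  have hwO : ContDiffOn ℝ (⊤ : ℕ∞) w (Ioo 0 R) := hw_smooth.mono Ioo_subset_Ico_self
  have hwU : ContDiffOn ℝ (⊤ : ℕ∞) w (Ioo (R/2) R) := hwO.mono hUsub
  have hw'U : ContDiffOn ℝ (⊤ : ℕ∞) (deriv w) (Ioo (R/2) R) := hwU.deriv_of_isOpen hUopen (by simp)
  have hwposO : ∀ r ∈ Ioo (0:ℝ) R, 0 < w r := fun r hr => hw_pos r hr.1.le hr.2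
  have hanti : StrictAntiOn w (Icc 0 R) := by
    apply strictAntiOn_of_deriv_neg (convex_Icc 0 R) hw_cont
    intro x hx
    rw [interior_Icc] at hx
    exact hw_dec x hx.1 hx.2
  have hwle1 : ∀ r ∈ Ioo (0:ℝ) R, w r ≤ 1 := by
    intro r hr
    have h := hanti (left_mem_Icc.mpr hR.le) ⟨hr.1.le, hr.2.le⟩ hr.1
    rw [hw0] at h; exact h.le
  have hwexp : ∀ r ∈ Ioo (0:ℝ) R, ∀ a b : ℝ, a ≤ b → w r ^ b ≤ w r ^ a :=
    fun r hr a b hab => Real.rpow_le_rpow_of_exponent_ge (hwposO r hr) (hwle1 r hr) hab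
  have hwrpos : ∀ r ∈ Ioo (0:ℝ) R, ∀ e : ℝ, 0 < w r ^ e :=
    fun r hr e => Real.rpow_pos_of_pos (hwposO r hr) e
  have hWU : ∀ β : ℝ, ContDiffOn ℝ (⊤ : ℕ∞) (fun t => w t ^ β) (Ioo (R/2) R) :=
    fun β => hwU.rpow_const_of_ne fun x hx => (hwposO x (hUsub hx)).ne'
  have hinvU : ContDiffOn ℝ (⊤ : ℕ∞) (fun t : ℝ => t⁻¹) (Ioo (R/2) R) :=
    fun x hx => (contDiffAt_inv ℝ (ne_of_gt (lt_trans hR2 hx.1))).contDiffWithinAt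
  have hcompact : ∀ n : ℕ, ∃ M : ℝ, ∀ r ∈ Ioo (0:ℝ) R, r ≤ 3*R/4 → |iteratedDeriv n w r| ≤ M := by
    intro n
    have h34 : 3*R/4 < R := by linarith
    have hcont : ContinuousOn (iteratedDerivWithin n w (Ico 0 R)) (Ico 0 R) :=
      hw_smooth.continuousOn_iteratedDerivWithin (by exact_mod_cast le_top) (uniqueDiffOn_Ico 0 R)
    have hsub : Icc (0:ℝ) (3*R/4) ⊆ Ico 0 R := fun x hx => ⟨hx.1, lt_of_le_of_lt hx.2 h34⟩
    obtain ⟨M, hM⟩ := isCompact_Icc.exists_bound_of_continuousOn (hcont.mono hsub)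
    refine ⟨M, fun r hr hr34 => ?_⟩
    have heq : iteratedDerivWithin n w (Ico 0 R) r = iteratedDeriv n w r := by
      have hset : Ico (0:ℝ) R =ᶠ[nhds r] Ioo (0:ℝ) R := by
        rw [Filter.eventuallyEq_set]
        filter_upwards [hOopen.mem_nhds hr] with y hy
        simp only [mem_Ico, mem_Ioo]
        constructor
        · intro h; exact ⟨hy.1, hy.2⟩
        · intro h; exact ⟨h.1.le, h.2⟩
      calc iteratedDerivWithin n w (Ico 0 R) r = iteratedDerivWithin n w (Ioo 0 R) r := by
            rw [iteratedDerivWithin_eq_iteratedFDerivWithin,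
              iteratedDerivWithin_eq_iteratedFDerivWithin,
              iteratedFDerivWithin_congr_set hset n]
        _ = iteratedDeriv n w r := iterDW_open_eq hOopen hr n
    have h := hM r ⟨hr.1.le, hr34⟩
    rwa [Real.norm_eq_abs, heq] at h
  have hw'bdd : ∃ C : ℝ, 0 ≤ C ∧ ∀ r ∈ Ioo (R/2) R, |deriv w r| ≤ C := by
    have hball : ∀ᶠ r in nhdsWithin R (Iio R), |deriv w r - w'R| < 1 := by
      have h := Metric.tendsto_nhds.mp hw'Rtend 1 one_pos
      simpa [Real.dist_eq] using h
    rw [eventually_nhdsWithin_iff, Metric.eventually_nhds_iff] at hball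
    obtain ⟨ε, hε, hballε⟩ := hball
    set a := max (R/2) (R - ε/2) with ha
    have haR : a < R := max_lt (by linarith) (by linarith)
    have hIcc : Icc (R/2) a ⊆ Ioo 0 R := fun x hx =>
      ⟨lt_of_lt_of_le hR2 hx.1, lt_of_le_of_lt hx.2 haR⟩
    have hcont : ContinuousOn (deriv w) (Ioo 0 R) := by
      have h := contOn_iterD hOopen hwO 1
      rwa [iteratedDeriv_one] at h
    obtain ⟨M, hM⟩ := isCompact_Icc.exists_bound_of_continuousOn (hcont.mono hIcc)
    refine ⟨max (max M (|w'R| + 1)) 0, le_max_right _ _, fun r hr => ?_⟩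
    rcases le_or_gt r a with h | h
    · have h2 := hM r ⟨hr.1.le, h⟩
      rw [Real.norm_eq_abs] at h2
      exact le_trans h2 (le_max_of_le_left (le_max_left _ _))
    · have h1 : dist r R < ε := by
        rw [Real.dist_eq, abs_of_nonpos (by linarith [hr.2])]
        have h2 : R - ε/2 ≤ a := le_max_right _ _
        linarith
      have h3 := hballε h1 hr.2
      calc |deriv w r| = |(deriv w r - w'R) + w'R| := by ring_nf
        _ ≤ |deriv w r - w'R| + |w'R| := abs_add_le _ _
        _ ≤ |w'R| + 1 := by linarith
        _ ≤ _ := le_max_of_le_left (le_max_right _ _)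
  have key : ∀ n : ℕ,
      (∃ C, 0 ≤ C ∧ ∀ r ∈ Ioo (R/2) R,
        |iteratedDeriv n w r| ≤ C * w r ^ (min 0 (α + 2 - (n : ℝ)))) ∧
      (∀ β : ℝ, ∃ C, 0 ≤ C ∧ ∀ r ∈ Ioo (R/2) R,
        |iteratedDeriv n (fun t => w t ^ β) r| ≤ C * w r ^ (β - (n : ℝ))) := by
    have hinvbdd : ∀ j : ℕ, ∃ K, 0 ≤ K ∧ ∀ r ∈ Ioo (R/2) R,
        |iteratedDeriv j (fun t:ℝ => t⁻¹) r| ≤ K := by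
      intro j
      have hIoi : ContDiffOn ℝ (⊤ : ℕ∞) (fun t:ℝ => t⁻¹) (Ioi 0) :=
        fun x hx => (contDiffAt_inv ℝ (ne_of_gt hx)).contDiffWithinAt
      have hcont := contOn_iterD isOpen_Ioi hIoi j
      have hsub : Icc (R/2) R ⊆ Ioi (0:ℝ) := fun x hx => lt_of_lt_of_le hR2 hx.1
      obtain ⟨K, hK⟩ := isCompact_Icc.exists_bound_of_continuousOn (hcont.mono hsub)
      refine ⟨max K 0, le_max_right _ _, fun r hr => ?_⟩
      have h := hK r ⟨hr.1.le, hr.2.le⟩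
      rw [Real.norm_eq_abs] at h
      exact le_trans h (le_max_left _ _)
    intro n
    induction n using Nat.strong_induction_on with
    | _ n IH =>
    have hA : ∃ C, 0 ≤ C ∧ ∀ r ∈ Ioo (R/2) R,
        |iteratedDeriv n w r| ≤ C * w r ^ (min 0 (α + 2 - (n : ℝ))) := by
      rcases n with _ | n0
      · -- n = 0
        refine ⟨1, zero_le_one, fun r hr => ?_⟩
        have hmin : min 0 (α + 2 - ((0:ℕ):ℝ)) = 0 := min_eq_left (by push_cast; linarith)
        rw [iteratedDeriv_zero, hmin, Real.rpow_zero, one_mul,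
          abs_of_pos (hwposO r (hUsub hr))]
        exact hwle1 r (hUsub hr)
      rcases n0 with _ | m
      · -- n = 1
        obtain ⟨C1, hC10, hC1⟩ := hw'bdd
        refine ⟨C1, hC10, fun r hr => ?_⟩
        have hmin : min 0 (α + 2 - ((1:ℕ):ℝ)) = 0 := min_eq_left (by push_cast; linarith)
        rw [iteratedDeriv_one, hmin, Real.rpow_zero, mul_one]
        exact hC1 r hr
      · -- n = m + 2
        have hstep : ∀ x ∈ Ioo (R/2) R, iteratedDeriv (m+1+1) w x =
            (-2) * iteratedDeriv m (fun t => deriv w t * t⁻¹) x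
              + (-c) * iteratedDeriv m (fun t => w t ^ α) x := by
          intro x hx
          rw [iteratedDeriv_succ', iteratedDeriv_succ']
          have h2 : deriv (deriv w) =ᶠ[nhds x]
              fun t => (-2) * (deriv w t * t⁻¹) + (-c) * (w t ^ α) := by
            filter_upwards [hUopen.mem_nhds hx] with t ht
            have h0t : (0:ℝ) < t := lt_trans hR2 ht.1
            have hode := hw_ode t h0t ht.2
            have htne : t ≠ 0 := ne_of_gt h0t
            linear_combination hode
          rw [Filter.EventuallyEq.iteratedDeriv_eq m h2]
          exact iter_lincomb hUopen hx (hw'U.mul hinvU) (hWU α) (-2) (-c) m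
        obtain ⟨CB, hCB0, hCB⟩ := (IH m (by omega)).2 α
        have hterm : ∀ i ∈ Finset.range (m+1), ∃ K, 0 ≤ K ∧ ∀ r ∈ Ioo (R/2) R,
            (m.choose i : ℝ) * |iteratedDeriv i (deriv w) r| *
              |iteratedDeriv (m - i) (fun t:ℝ => t⁻¹) r|
            ≤ K * w r ^ (min 0 (α - (m:ℝ))) := by
          intro i hi
          have him : i ≤ m := Nat.lt_succ_iff.mp (Finset.mem_range.mp hi)
          obtain ⟨CA, hCA0, hCA⟩ := (IH (i+1) (by omega)).1
          obtain ⟨KI, hKI0, hKI⟩ := hinvbdd (m - i)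
          have hKnn : 0 ≤ (m.choose i : ℝ) * CA * KI :=
            mul_nonneg (mul_nonneg (Nat.cast_nonneg _) hCA0) hKI0
          refine ⟨(m.choose i : ℝ) * CA * KI, hKnn, fun r hr => ?_⟩
          have h1 : |iteratedDeriv i (deriv w) r| ≤ CA * w r ^ (min 0 (α + 2 - ((i+1:ℕ):ℝ))) := by
            have h2 := hCA r hr
            rwa [iteratedDeriv_succ'] at h2
          have hexp : w r ^ (min 0 (α + 2 - ((i+1:ℕ):ℝ))) ≤ w r ^ (min 0 (α - (m:ℝ))) := by
            apply hwexp r (hUsub hr)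
            apply min_le_min le_rfl
            have hile : (i:ℝ) ≤ (m:ℝ) := Nat.cast_le.mpr him
            push_cast
            linarith
          calc (m.choose i : ℝ) * |iteratedDeriv i (deriv w) r| *
                |iteratedDeriv (m-i) (fun t:ℝ => t⁻¹) r|
              ≤ (m.choose i : ℝ) * (CA * w r ^ (min 0 (α + 2 - ((i+1:ℕ):ℝ)))) * KI := by
                apply mul_le_mul _ (hKI r hr) (abs_nonneg _)
                  (mul_nonneg (Nat.cast_nonneg _)
                    (mul_nonneg hCA0 (hwrpos r (hUsub hr) _).le))
                apply mul_le_mul_of_nonneg_left h1 (Nat.cast_nonneg _)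
            _ = ((m.choose i : ℝ) * CA * KI) * w r ^ (min 0 (α + 2 - ((i+1:ℕ):ℝ))) := by ring
            _ ≤ ((m.choose i : ℝ) * CA * KI) * w r ^ (min 0 (α - (m:ℝ))) :=
                mul_le_mul_of_nonneg_left hexp hKnn
        obtain ⟨KS, hKS0, hKS⟩ := exists_sum_bound hterm
        refine ⟨2 * KS + c * CB,
          add_nonneg (mul_nonneg (by norm_num) hKS0) (mul_nonneg hc.le hCB0),
          fun r hr => ?_⟩
        have hE : min 0 (α + 2 - ((m+1+1:ℕ):ℝ)) = min 0 (α - (m:ℝ)) := by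
          have h : α + 2 - ((m+1+1:ℕ):ℝ) = α - (m:ℝ) := by push_cast; ring
          rw [h]
        rw [hstep r hr, hE]
        have hD1 : |iteratedDeriv m (fun t => deriv w t * t⁻¹) r|
            ≤ KS * w r ^ (min 0 (α - (m:ℝ))) :=
          le_trans (abs_iterD_mul_le hUopen hw'U hinvU hr m) (hKS r hr)
        have hD2 : |iteratedDeriv m (fun t => w t ^ α) r| ≤ CB * w r ^ (min 0 (α - (m:ℝ))) := by
          refine le_trans (hCB r hr) (mul_le_mul_of_nonneg_left ?_ hCB0)
          exact hwexp r (hUsub hr) _ _ (min_le_right _ _)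
        have habs2 : |(-2 : ℝ) * iteratedDeriv m (fun t => deriv w t * t⁻¹) r
              + (-c) * iteratedDeriv m (fun t => w t ^ α) r|
            ≤ 2 * |iteratedDeriv m (fun t => deriv w t * t⁻¹) r|
              + c * |iteratedDeriv m (fun t => w t ^ α) r| := by
          refine le_trans (abs_add_le _ _) ?_
          rw [abs_mul, abs_mul, abs_neg, abs_neg, abs_of_pos hc]
          norm_num
        refine le_trans habs2 ?_
        have := hwrpos r (hUsub hr) (min 0 (α - (m:ℝ)))
        nlinarith [hD1, hD2, abs_nonneg (iteratedDeriv m (fun t => deriv w t * t⁻¹) r),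
          abs_nonneg (iteratedDeriv m (fun t => w t ^ α) r)]
    refine ⟨hA, ?_⟩
    intro β
    rcases n with _ | m
    · -- n = 0
      refine ⟨1, zero_le_one, fun r hr => ?_⟩
      have hzero : β - ((0:ℕ):ℝ) = β := by push_cast; ring
      rw [iteratedDeriv_zero, hzero, one_mul, abs_of_pos (hwrpos r (hUsub hr) β)]
    · -- n = m + 1
      have hAall : ∀ j : ℕ, j ≤ m+1 → ∃ C, 0 ≤ C ∧ ∀ r ∈ Ioo (R/2) R,
          |iteratedDeriv j w r| ≤ C * w r ^ (min 0 (α+2-(j:ℝ))) := by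
        intro j hj
        rcases Nat.lt_or_ge j (m+1) with hlt | hge
        · exact (IH j (by omega)).1
        · have hj' : j = m+1 := le_antisymm hj hge
          subst hj'
          exact hA
      have hstepB : ∀ x ∈ Ioo (R/2) R, iteratedDeriv (m+1) (fun t => w t ^ β) x
          = β * iteratedDeriv m (fun t => w t ^ (β-1) * deriv w t) x := by
        intro x hx
        rw [iteratedDeriv_succ']
        have h2 : deriv (fun u => w u ^ β) =ᶠ[nhds x]
            fun t => β * (w t ^ (β-1) * deriv w t) := by
          filter_upwards [hUopen.mem_nhds hx] with t ht
          have hdiff : DifferentiableAt ℝ w t :=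
            (hwU.contDiffAt (hUopen.mem_nhds ht)).differentiableAt (by simp)
          rw [deriv_rpow_const hdiff (Or.inl (hwposO t (hUsub ht)).ne')]
          ring
        rw [Filter.EventuallyEq.iteratedDeriv_eq m h2]
        exact iter_constmul hUopen hx ((hWU (β-1)).mul hw'U) β m
      have htermB : ∀ i ∈ Finset.range (m+1), ∃ K, 0 ≤ K ∧ ∀ r ∈ Ioo (R/2) R,
          (m.choose i : ℝ) * |iteratedDeriv i (fun t => w t ^ (β-1)) r| *
            |iteratedDeriv (m-i) (deriv w) r|
          ≤ K * w r ^ (β - ((m+1:ℕ):ℝ)) := by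
        intro i hi
        have him : i ≤ m := Nat.lt_succ_iff.mp (Finset.mem_range.mp hi)
        obtain ⟨Ci, hCi0, hCi⟩ := (IH i (by omega)).2 (β - 1)
        obtain ⟨Di, hDi0, hDi⟩ := hAall (m - i + 1) (by omega)
        have hKnn : 0 ≤ (m.choose i:ℝ) * Ci * Di :=
          mul_nonneg (mul_nonneg (Nat.cast_nonneg _) hCi0) hDi0
        refine ⟨(m.choose i:ℝ) * Ci * Di, hKnn, fun r hr => ?_⟩
        have h1 := hCi r hr
        have h2 : |iteratedDeriv (m-i) (deriv w) r|
            ≤ Di * w r ^ (min 0 (α+2-((m-i+1:ℕ):ℝ))) := by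
          have h3 := hDi r hr
          rwa [iteratedDeriv_succ'] at h3
        have hwpos := hwposO r (hUsub hr)
        calc (m.choose i:ℝ) * |iteratedDeriv i (fun t => w t ^ (β-1)) r| *
              |iteratedDeriv (m-i) (deriv w) r|
            ≤ (m.choose i:ℝ) * (Ci * w r ^ (β - 1 - (i:ℝ))) *
                (Di * w r ^ (min 0 (α+2-((m-i+1:ℕ):ℝ)))) := by
              apply mul_le_mul _ h2 (abs_nonneg _)
                (mul_nonneg (Nat.cast_nonneg _)
                  (mul_nonneg hCi0 (hwrpos r (hUsub hr) _).le))
              apply mul_le_mul_of_nonneg_left h1 (Nat.cast_nonneg _)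
          _ = ((m.choose i:ℝ) * Ci * Di) *
                (w r ^ (β - 1 - (i:ℝ)) * w r ^ (min 0 (α+2-((m-i+1:ℕ):ℝ)))) := by ring
          _ = ((m.choose i:ℝ) * Ci * Di) *
                w r ^ (β - 1 - (i:ℝ) + min 0 (α+2-((m-i+1:ℕ):ℝ))) := by
              rw [← Real.rpow_add hwpos]
          _ ≤ ((m.choose i:ℝ) * Ci * Di) * w r ^ (β - ((m+1:ℕ):ℝ)) := by
              apply mul_le_mul_of_nonneg_left _ hKnn
              apply hwexp r (hUsub hr)
              have hcast : ((m - i + 1:ℕ):ℝ) = (m:ℝ) - (i:ℝ) + 1 := by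
                push_cast [Nat.cast_sub him]; ring
              have hile : (i:ℝ) ≤ (m:ℝ) := Nat.cast_le.mpr him
              rw [hcast]
              push_cast
              rcases le_total (0:ℝ) (α + 2 - ((m:ℝ) - (i:ℝ) + 1)) with hh | hh
              · rw [min_eq_left hh]; linarith
              · rw [min_eq_right hh]; linarith
      obtain ⟨KS, hKS0, hKS⟩ := exists_sum_bound htermB
      refine ⟨|β| * KS, mul_nonneg (abs_nonneg _) hKS0, fun r hr => ?_⟩
      rw [hstepB r hr, abs_mul]
      calc |β| * |iteratedDeriv m (fun t => w t ^ (β-1) * deriv w t) r|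
          ≤ |β| * (KS * w r ^ (β - ((m+1:ℕ):ℝ))) := by
            apply mul_le_mul_of_nonneg_left _ (abs_nonneg β)
            exact le_trans (abs_iterD_mul_le hUopen (hWU (β-1)) hw'U hr m) (hKS r hr)
        _ = |β| * KS * w r ^ (β - ((m+1:ℕ):ℝ)) := by ring
  constructor
  · -- part 1
    intro i hi
    obtain ⟨M1, hM1⟩ := hcompact i
    obtain ⟨C, hC0, hC⟩ := (key i).1
    refine ⟨max M1 C, fun r hr => ?_⟩
    rcases le_or_gt r (3*R/4) with h | h
    · exact le_max_of_le_left (hM1 r hr h)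
    · have hrU : r ∈ Ioo (R/2) R := ⟨by linarith [hr.2], hr.2⟩
      have hmin : min 0 (α + 2 - (i:ℝ)) = 0 := min_eq_left (by linarith)
      have := hC r hrU
      rw [hmin, Real.rpow_zero, mul_one] at this
      exact le_max_of_le_right this
  · -- part 2
    intro k hk1 hk
    obtain ⟨M1, hM1⟩ := hcompact (k+1)
    obtain ⟨C, hC0, hC⟩ := (key (k+1)).1
    have hex : (0:ℝ) ≤ ((k:ℝ) - 1) / 2 := by
      have : (1:ℝ) ≤ k := by exact_mod_cast hk1
      linarith
    refine ⟨max M1 C, fun r hr => ?_⟩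
    have hw01 : 0 < w r := hwposO r hr
    have hwle : w r ≤ 1 := hwle1 r hr
    have hwr1 : w r ^ (((k:ℝ) - 1) / 2) ≤ 1 := Real.rpow_le_one hw01.le hwle hex
    have hwrpos' : 0 < w r ^ (((k:ℝ) - 1) / 2) := Real.rpow_pos_of_pos hw01 _
    rw [abs_mul, abs_of_pos hwrpos']
    rcases le_or_gt r (3*R/4) with h | h
    · have := hM1 r hr h
      have hM1nn : 0 ≤ M1 := le_trans (abs_nonneg _) this
      calc w r ^ (((k:ℝ) - 1) / 2) * |iteratedDeriv (k+1) w r| ≤ 1 * M1 :=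
            mul_le_mul hwr1 this (abs_nonneg _) zero_le_one
        _ ≤ max M1 C := by rw [one_mul]; exact le_max_left _ _
    · have hrU : r ∈ Ioo (R/2) R := ⟨by linarith [hr.2], hr.2⟩
      have hcast : ((k+1:ℕ):ℝ) = (k:ℝ) + 1 := by push_cast; ring
      have h1 : |iteratedDeriv (k+1) w r| ≤ C * w r ^ (min 0 (α + 1 - (k:ℝ))) := by
        have := hC r hrU
        rwa [hcast, show α + 2 - ((k:ℝ)+1) = α + 1 - (k:ℝ) by ring] at this
      calc w r ^ (((k:ℝ) - 1) / 2) * |iteratedDeriv (k+1) w r|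
          ≤ w r ^ (((k:ℝ) - 1) / 2) * (C * w r ^ (min 0 (α + 1 - (k:ℝ)))) :=
            mul_le_mul_of_nonneg_left h1 hwrpos'.le
        _ = C * (w r ^ (((k:ℝ) - 1) / 2) * w r ^ (min 0 (α + 1 - (k:ℝ)))) := by ring
        _ = C * w r ^ (((k:ℝ) - 1) / 2 + min 0 (α + 1 - (k:ℝ))) := by
            rw [← Real.rpow_add hw01]
        _ ≤ C * 1 := by
            apply mul_le_mul_of_nonneg_left _ hC0
            apply Real.rpow_le_one hw01.le hwle
            rcases le_total (0:ℝ) (α + 1 - (k:ℝ)) with hh | hh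
            · rw [min_eq_left hh]; linarith
            · rw [min_eq_right hh]; linarith
        _ ≤ max M1 C := by rw [mul_one]; exact le_max_right _ _
end

section
/- Let 1 < α < 5 and let w be a Lane-Emden enthalpy profile. Then for every integer j with 0 ≤ j < 3α + 3, the weighted integral ∫₀^R w(r)^{α+j} r⁴ |(∂_r^{j+1} w)(r)|² dr is finite. -/
open MeasureTheory Real Filter Set

namespace LaneEmdenAux

structure LTerm where
  C : ℝ
  a : ℕ
  g : ℝ
  n : ℕ

noncomputable def teval (w : ℝ → ℝ) (t : LTerm) (r : ℝ) : ℝ :=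
  t.C * r ^ (-(t.a : ℝ)) * w r ^ t.g * (deriv w r) ^ t.n

noncomputable def leval (w : ℝ → ℝ) (L : List LTerm) (r : ℝ) : ℝ :=
  (L.map fun t => teval w t r).sum

lemma leval_nil (w : ℝ → ℝ) (r : ℝ) : leval w [] r = 0 := rfl

lemma leval_cons (w : ℝ → ℝ) (t : LTerm) (L : List LTerm) (r : ℝ) :
    leval w (t :: L) r = teval w t r + leval w L r := rfl

lemma leval_append (w : ℝ → ℝ) (L₁ L₂ : List LTerm) (r : ℝ) :
    leval w (L₁ ++ L₂) r = leval w L₁ r + leval w L₂ r := by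
  induction L₁ with
  | nil => simp [leval_nil, leval]
  | cons t L ih => simp [List.cons_append, leval_cons, ih]; ring

def dterm (α c : ℝ) (t : LTerm) : List LTerm :=
  [⟨-(t.a : ℝ) * t.C, t.a + 1, t.g, t.n⟩,
   ⟨t.g * t.C, t.a, t.g - 1, t.n + 1⟩,
   ⟨-2 * (t.n : ℝ) * t.C, t.a + 1, t.g, t.n⟩,
   ⟨-c * (t.n : ℝ) * t.C, t.a, t.g + α, t.n - 1⟩]

def dlist (α c : ℝ) : List LTerm → List LTerm
  | [] => []
  | t :: L => dterm α c t ++ dlist α c L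

lemma teval_hasDerivAt (α c : ℝ) (w : ℝ → ℝ) {r : ℝ} (hr : 0 < r)
    (hw : 0 < w r)
    (hd1 : HasDerivAt w (deriv w r) r)
    (hd2 : HasDerivAt (deriv w) (deriv (deriv w) r) r)
    (hode : deriv (deriv w) r = -(2 / r) * deriv w r - c * w r ^ α)
    (t : LTerm) :
    HasDerivAt (fun x => teval w t x) (leval w (dterm α c t) r) r := by
  rcases t with ⟨C, a, g, n⟩
  have h1 : HasDerivAt (fun x : ℝ => x ^ (-(a : ℝ)))
      (-(a : ℝ) * r ^ (-(a : ℝ) - 1)) r :=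
    Real.hasDerivAt_rpow_const (Or.inl (ne_of_gt hr))
  have h2 : HasDerivAt (fun x => w x ^ g)
      (deriv w r * g * w r ^ (g - 1)) r :=
    hd1.rpow_const (Or.inl (ne_of_gt hw))
  have h3 : HasDerivAt (fun x => (deriv w x) ^ n)
      ((n : ℝ) * (deriv w r) ^ (n - 1) * deriv (deriv w) r) r :=
    hd2.pow n
  have H := ((h1.const_mul C).mul h2).mul h3
  have goalfun : (fun x => teval w ⟨C, a, g, n⟩ x)
      = fun x => C * x ^ (-(a : ℝ)) * w x ^ g * (deriv w x) ^ n := rfl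
  rw [goalfun]
  refine H.congr_deriv ?_
  rw [hode]
  have ea' : r ^ (-(a : ℝ) - 1) = r ^ (-(a : ℝ)) / r := by
    rw [Real.rpow_sub hr, Real.rpow_one]
  have ea2 : r ^ (-((a : ℝ) + 1)) = r ^ (-(a : ℝ)) / r := by
    rw [show (-((a : ℝ) + 1)) = -(a : ℝ) - 1 by ring, Real.rpow_sub hr, Real.rpow_one]
  have eg : w r ^ (g - 1) = w r ^ g / w r := by
    rw [Real.rpow_sub hw, Real.rpow_one]
  have eα : w r ^ (g + α) = w r ^ g * w r ^ α := Real.rpow_add hw _ _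
  rcases n with _ | m
  · simp only [leval, dterm, teval, List.map, List.sum_cons, List.sum_nil]
    push_cast
    rw [ea', ea2, eg, eα]
    simp only [pow_zero, pow_one, Nat.cast_zero]
    field_simp
    ring
  · simp only [leval, dterm, teval, List.map, List.sum_cons, List.sum_nil]
    push_cast
    rw [ea', ea2, eg, eα]
    simp only [Nat.add_sub_cancel, pow_succ, Pi.mul_apply]
    field_simp
    ring

lemma leval_hasDerivAt (α c : ℝ) (w : ℝ → ℝ) {r : ℝ} (hr : 0 < r)
    (hw : 0 < w r)
    (hd1 : HasDerivAt w (deriv w r) r)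
    (hd2 : HasDerivAt (deriv w) (deriv (deriv w) r) r)
    (hode : deriv (deriv w) r = -(2 / r) * deriv w r - c * w r ^ α)
    (L : List LTerm) :
    HasDerivAt (fun x => leval w L x) (leval w (dlist α c L) r) r := by
  induction L with
  | nil =>
    simpa [leval_nil, dlist] using (hasDerivAt_const r (0 : ℝ))
  | cons t L ih =>
    have := (teval_hasDerivAt α c w hr hw hd1 hd2 hode t).add ih
    simp only [dlist, leval_append]
    exact this

lemma dlist_mem {α c : ℝ} {t' : LTerm} {L : List LTerm} (h : t' ∈ dlist α c L) :
    ∃ t ∈ L, t' ∈ dterm α c t := by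
  induction L with
  | nil => simp [dlist] at h
  | cons t L ih =>
    rcases List.mem_append.1 h with h1 | h2
    · exact ⟨t, List.mem_cons_self .., h1⟩
    · obtain ⟨u, hu, hu'⟩ := ih h2
      exact ⟨u, List.mem_cons_of_mem _ hu, hu'⟩

/-- Main representation lemma. -/
lemma laneEmden_rep (α c R : ℝ) (hα : 1 < α) (hR : 0 < R) (w : ℝ → ℝ)
    (hw_smooth : ContDiffOn ℝ (⊤ : ℕ∞) w (Set.Ico 0 R))
    (hw_pos : ∀ r, 0 ≤ r → r < R → 0 < w r)
    (hw_ode : ∀ r, 0 < r → r < R →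
      deriv (deriv w) r + (2 / r) * deriv w r + c * w r ^ α = 0) :
    ∀ k : ℕ, ∃ L : List LTerm,
      (∀ t ∈ L, t.C = 0 ∨ t.g = 0 ∨ α + 2 - (k + 1) ≤ t.g) ∧
      ∀ r ∈ Set.Ioo (0 : ℝ) R, iteratedDeriv (k + 1) w r = leval w L r := by
  have hd1 : ∀ r ∈ Set.Ioo (0 : ℝ) R, HasDerivAt w (deriv w r) r := by
    intro r hr
    have hmem : Set.Ico (0 : ℝ) R ∈ nhds r := Ico_mem_nhds hr.1 hr.2
    have hct : ContDiffAt ℝ 1 w r := (hw_smooth.contDiffAt hmem).of_le (by simp)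
    exact (hct.differentiableAt one_ne_zero).hasDerivAt
  have hd2 : ∀ r ∈ Set.Ioo (0 : ℝ) R, HasDerivAt (deriv w) (deriv (deriv w) r) r := by
    intro r hr
    have hsm : ContDiffOn ℝ (⊤ : ℕ∞) w (Set.Ioo 0 R) :=
      (hw_smooth.of_le (by simp)).mono Set.Ioo_subset_Ico_self
    have hder : ContDiffOn ℝ (⊤ : ℕ∞) (deriv w) (Set.Ioo 0 R) :=
      ((contDiffOn_infty_iff_deriv_of_isOpen isOpen_Ioo).1 hsm).2
    have : DifferentiableAt ℝ (deriv w) r := by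
      have h2 : ContDiffOn ℝ (1 : ℕ∞) (deriv w) (Set.Ioo 0 R) := hder.of_le (by exact_mod_cast le_top)
      have h' := (h2 r hr).differentiableWithinAt (by simp)
      exact h'.differentiableAt (isOpen_Ioo.mem_nhds hr)
    exact this.hasDerivAt
  have hode : ∀ r ∈ Set.Ioo (0 : ℝ) R,
      deriv (deriv w) r = -(2 / r) * deriv w r - c * w r ^ α := by
    intro r hr
    have := hw_ode r hr.1 hr.2
    linarith
  intro k
  induction k with
  | zero =>
    refine ⟨[⟨1, 0, 0, 1⟩], ?_, ?_⟩
    · intro t ht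
      simp only [List.mem_singleton] at ht
      subst ht
      exact Or.inr (Or.inl rfl)
    · intro r hr
      simp [iteratedDeriv_one, leval, teval]
  | succ k ih =>
    obtain ⟨L, hLinv, hLeq⟩ := ih
    refine ⟨dlist α c L, ?_, ?_⟩
    · intro t' ht'
      obtain ⟨t, htL, ht'mem⟩ := dlist_mem ht'
      simp only [dterm, List.mem_cons, List.not_mem_nil, or_false] at ht'mem
      have hk : (0 : ℝ) ≤ (k : ℝ) := Nat.cast_nonneg k
      rcases hLinv t htL with hC | hg0 | hgb
      · left
        rcases ht'mem with h | h | h | h <;> subst h <;> dsimp only <;> rw [hC] <;> ring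
      · rcases ht'mem with h | h | h | h <;> subst h <;> dsimp only
        · exact Or.inr (Or.inl hg0)
        · left; rw [hg0]; ring
        · exact Or.inr (Or.inl hg0)
        · right; right; rw [hg0]; push_cast; linarith
      · rcases ht'mem with h | h | h | h <;> subst h <;> dsimp only <;>
          refine Or.inr (Or.inr ?_) <;> push_cast at hgb ⊢ <;> linarith
    · intro r hr
      have heq : deriv (iteratedDeriv (k + 1) w) r = deriv (fun x => leval w L x) r := by
        apply Filter.EventuallyEq.deriv_eq
        exact Filter.eventually_of_mem (isOpen_Ioo.mem_nhds hr) hLeq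
      calc iteratedDeriv (k + 1 + 1) w r
          = deriv (iteratedDeriv (k + 1) w) r := by rw [iteratedDeriv_succ]
        _ = deriv (fun x => leval w L x) r := heq
        _ = leval w (dlist α c L) r :=
            (leval_hasDerivAt α c w hr.1 (hw_pos r hr.1.le hr.2) (hd1 r hr)
              (hd2 r hr) (hode r hr) L).deriv

lemma itDerivWithin_eq (n : ℕ) (w : ℝ → ℝ) {R x : ℝ} (hx : x ∈ Set.Ioo 0 R) :
    iteratedDerivWithin n w (Set.Ico 0 R) x = iteratedDeriv n w x := by
  have hmem : Set.Ico (0 : ℝ) R ∈ nhds x := Ico_mem_nhds hx.1 hx.2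
  have h1 : iteratedFDerivWithin ℝ n w (Set.univ ∩ Set.Ico 0 R) x
      = iteratedFDerivWithin ℝ n w Set.univ x := iteratedFDerivWithin_inter hmem
  rw [Set.univ_inter, iteratedFDerivWithin_univ] at h1
  rw [iteratedDerivWithin_eq_iteratedFDerivWithin, iteratedDeriv_eq_iteratedFDeriv, h1]

lemma leval_bound (w : ℝ → ℝ) (μ M ρ R : ℝ)
    (hρ : 0 < ρ) (hμ : μ ≤ 0) (hM0 : 0 ≤ M)
    (hw1 : ∀ r, ρ ≤ r → r < R → 0 < w r ∧ w r ≤ 1)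
    (hM : ∀ r, ρ ≤ r → r < R → |deriv w r| ≤ M)
    (L : List LTerm) (hinv : ∀ t ∈ L, t.C = 0 ∨ μ ≤ t.g) :
    ∃ B : ℝ, 0 ≤ B ∧ ∀ r, ρ ≤ r → r < R → |leval w L r| ≤ B * w r ^ μ := by
  induction L with
  | nil => exact ⟨0, le_rfl, fun r _ _ => by simp [leval_nil]⟩
  | cons t L ih =>
    obtain ⟨B, hB0, hB⟩ := ih fun u hu => hinv u (List.mem_cons_of_mem _ hu)
    set Bt : ℝ := |t.C| * ρ ^ (-(t.a : ℝ)) * M ^ t.n with hBt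
    have hBt0 : 0 ≤ Bt := by positivity
    refine ⟨Bt + B, by positivity, fun r hr1 hr2 => ?_⟩
    have hwpos := (hw1 r hr1 hr2).1
    have hwle := (hw1 r hr1 hr2).2
    have hwμ : 0 ≤ w r ^ μ := Real.rpow_nonneg hwpos.le μ
    have hteval : |teval w t r| ≤ Bt * w r ^ μ := by
      rcases hinv t (List.mem_cons_self ..) with hC | hg
      · have h0 : teval w t r = 0 := by simp [teval, hC]
        rw [h0, abs_zero]; positivity
      · have habs : |teval w t r|
            = |t.C| * r ^ (-(t.a : ℝ)) * w r ^ t.g * |deriv w r| ^ t.n := by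
          have hrpos : (0 : ℝ) < r := lt_of_lt_of_le hρ hr1
          rw [teval, abs_mul, abs_mul, abs_mul, abs_pow,
            abs_of_nonneg (Real.rpow_nonneg hrpos.le _),
            abs_of_nonneg (Real.rpow_nonneg hwpos.le _)]
        rw [habs]
        have hrpos : (0 : ℝ) < ρ := hρ
        calc |t.C| * r ^ (-(t.a : ℝ)) * w r ^ t.g * |deriv w r| ^ t.n
            ≤ |t.C| * ρ ^ (-(t.a : ℝ)) * w r ^ μ * M ^ t.n := by
              have b1 : r ^ (-(t.a : ℝ)) ≤ ρ ^ (-(t.a : ℝ)) :=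
                Real.rpow_le_rpow_of_nonpos hρ hr1 (neg_nonpos.2 (Nat.cast_nonneg _))
              have b2 : w r ^ t.g ≤ w r ^ μ :=
                Real.rpow_le_rpow_of_exponent_ge hwpos hwle hg
              have b3 : |deriv w r| ^ t.n ≤ M ^ t.n :=
                pow_le_pow_left₀ (abs_nonneg _) (hM r hr1 hr2) t.n
              have c1 : |t.C| * r ^ (-(t.a : ℝ)) ≤ |t.C| * ρ ^ (-(t.a : ℝ)) := by
                apply mul_le_mul_of_nonneg_left b1 (abs_nonneg _)
              have c2 : |t.C| * r ^ (-(t.a : ℝ)) * w r ^ t.g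
                  ≤ |t.C| * ρ ^ (-(t.a : ℝ)) * w r ^ μ := by
                apply mul_le_mul c1 b2 (Real.rpow_nonneg hwpos.le _) (by positivity)
              apply mul_le_mul c2 b3 (by positivity) (by positivity)
          _ = Bt * w r ^ μ := by rw [hBt]; ring
    calc |leval w (t :: L) r| ≤ |teval w t r| + |leval w L r| := by
          rw [leval_cons]; exact abs_add_le _ _
      _ ≤ Bt * w r ^ μ + B * w r ^ μ := add_le_add hteval (hB r hr1 hr2)
      _ = (Bt + B) * w r ^ μ := by ring

end LaneEmdenAux

set_option maxHeartbeats 2000000 in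
open LaneEmdenAux in
/-- For every integer `0 ≤ j < 3α + 3`, the weighted integral
`∫₀^R w^{α+j} r⁴ |∂_r^{j+1} w|² dr` is finite. -/
theorem laneEmden_weighted_integrability
    (α c R : ℝ) (hα : 1 < α) (hα' : α < 5) (hc : 0 < c) (hR : 0 < R)
    (w : ℝ → ℝ)
    (hw_cont : ContinuousOn w (Set.Icc 0 R))
    (hw_smooth : ContDiffOn ℝ (⊤ : ℕ∞) w (Set.Ico 0 R))
    (hw0 : w 0 = 1) (hw'0 : deriv w 0 = 0)
    (hw_pos : ∀ r, 0 ≤ r → r < R → 0 < w r)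
    (hwR : w R = 0)
    (hw_dec : ∀ r, 0 < r → r < R → deriv w r < 0)
    (hw_pv : ∃ w'R : ℝ, w'R < 0 ∧
      Filter.Tendsto (deriv w) (nhdsWithin R (Set.Iio R)) (nhds w'R))
    (hw_ode : ∀ r, 0 < r → r < R →
      deriv (deriv w) r + (2 / r) * deriv w r + c * w r ^ α = 0) :
    ∀ j : ℕ, (j : ℝ) < 3 * α + 3 →
      MeasureTheory.IntegrableOn
        (fun r => w r ^ (α + j) * r ^ 4 * (iteratedDeriv (j + 1) w r) ^ 2)
        (Set.Ioo 0 R) := by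
  intro j hj
  set G : ℝ → ℝ := fun r => w r ^ (α + j) * r ^ 4 * (iteratedDeriv (j + 1) w r) ^ 2 with hGdef
  -- w ≤ 1
  have hanti : StrictAntiOn w (Set.Icc 0 R) := by
    apply strictAntiOn_of_deriv_neg (convex_Icc 0 R) hw_cont
    intro x hx
    rw [interior_Icc] at hx
    exact hw_dec x hx.1 hx.2
  have hw_le_one : ∀ r, 0 ≤ r → r ≤ R → w r ≤ 1 := by
    intro r hr0 hrR
    rcases eq_or_lt_of_le hr0 with h | h
    · rw [← h, hw0]
    · have := hanti (Set.left_mem_Icc.2 hR.le) ⟨hr0, hrR⟩ h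
      rw [hw0] at this
      exact this.le
  -- first derivative exists at interior points
  have hd1 : ∀ r ∈ Set.Ioo (0 : ℝ) R, HasDerivAt w (deriv w r) r := by
    intro r hr
    have hmem : Set.Ico (0 : ℝ) R ∈ nhds r := Ico_mem_nhds hr.1 hr.2
    have hct : ContDiffAt ℝ 1 w r := (hw_smooth.contDiffAt hmem).of_le (by simp)
    exact (hct.differentiableAt one_ne_zero).hasDerivAt
  -- continuity of iterated derivatives
  have hwithin_cont : ∀ m : ℕ, ContinuousOn (iteratedDerivWithin m w (Set.Ico 0 R))
      (Set.Ico 0 R) :=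
    fun m => hw_smooth.continuousOn_iteratedDerivWithin (by exact_mod_cast le_top) (uniqueDiffOn_Ico 0 R)
  have hit_cont : ContinuousOn (iteratedDeriv (j + 1) w) (Set.Ioo 0 R) := by
    apply ((hwithin_cont (j + 1)).mono Set.Ioo_subset_Ico_self).congr
    intro x hx
    exact (itDerivWithin_eq (j + 1) w hx).symm
  have hG_cont : ContinuousOn G (Set.Ioo 0 R) := by
    apply ContinuousOn.mul
    apply ContinuousOn.mul
    · apply ContinuousOn.rpow_const
        (hw_cont.mono (fun x hx => ⟨hx.1.le, hx.2.le⟩))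
      intro x hx
      exact Or.inl (ne_of_gt (hw_pos x hx.1.le hx.2))
    · exact (continuous_pow 4).continuousOn
    · exact hit_cont.pow 2
  -- the vacuum boundary constants
  obtain ⟨l, hl_neg, hl_tend⟩ := hw_pv
  have hev : ∀ᶠ s in nhdsWithin R (Set.Iio R),
      deriv w s ≤ l / 2 ∧ |deriv w s| ≤ |l| + 1 := by
    have h1 : ∀ᶠ s in nhdsWithin R (Set.Iio R),
        dist (deriv w s) l < min (-l / 2) 1 :=
      Metric.tendsto_nhds.mp hl_tend _ (lt_min (by linarith) one_pos)
    filter_upwards [h1] with s hs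
    rw [Real.dist_eq] at hs
    have h2 := abs_lt.1 (lt_of_lt_of_le hs (min_le_left _ _))
    have h3 := abs_lt.1 (lt_of_lt_of_le hs (min_le_right _ _))
    constructor
    · linarith [h2.2]
    · calc |deriv w s| = |l + (deriv w s - l)| := by ring_nf
        _ ≤ |l| + |deriv w s - l| := abs_add_le _ _
        _ ≤ |l| + 1 := by have := abs_lt.2 h3; linarith [(abs_lt.2 h3)]
  obtain ⟨a, ha_lt, ha_sub⟩ := (mem_nhdsLT_iff_exists_Ioo_subset' (show R - 1 < R by linarith)).1 hev
  set ρ : ℝ := max a (R / 2) with hρdef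
  have hρ_pos : 0 < ρ := lt_of_lt_of_le (by linarith) (le_max_right _ _)
  have hρ_lt : ρ < R := max_lt ha_lt (by linarith)
  have hbounds : ∀ s, ρ < s → s < R → deriv w s ≤ l / 2 ∧ |deriv w s| ≤ |l| + 1 :=
    fun s h1 h2 => ha_sub ⟨lt_of_le_of_lt (le_max_left _ _) h1, h2⟩
  set σ : ℝ := (ρ + R) / 2 with hσdef
  have hσ_pos : 0 < σ := by simp only [hσdef]; linarith
  have hσ_lt : σ < R := by simp only [hσdef]; linarith
  have hρσ : ρ < σ := by simp only [hσdef]; linarith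
  -- lower bound for w near the boundary
  have hlow : ∀ r, σ ≤ r → r < R → (-l / 2) * (R - r) ≤ w r := by
    intro r hr1 hr2
    have hr0 : 0 < r := lt_of_lt_of_le hσ_pos hr1
    obtain ⟨ξ, hξ, hslope⟩ := exists_hasDerivAt_eq_slope w (deriv w) hr2
      (hw_cont.mono (Set.Icc_subset_Icc (by linarith) le_rfl))
      (fun x hx => hd1 x ⟨lt_trans hr0 hx.1, hx.2⟩)
    rw [hwR] at hslope
    have hξb := (hbounds ξ (lt_of_lt_of_le hρσ (le_trans hr1 hξ.1.le)) hξ.2).1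
    rw [hslope] at hξb
    have hRr : 0 < R - r := by linarith
    rw [div_le_iff₀ hRr] at hξb
    linarith
  -- representation of the iterated derivative
  obtain ⟨L, hLinv, hLeq⟩ := laneEmden_rep α c R hα hR w hw_smooth hw_pos hw_ode j
  set μ : ℝ := min 0 (α + 1 - j) with hμdef
  have hμ0 : μ ≤ 0 := min_le_left _ _
  have hinv' : ∀ t ∈ L, t.C = 0 ∨ μ ≤ t.g := by
    intro t ht
    rcases hLinv t ht with h | h | h
    · exact Or.inl h
    · exact Or.inr (h ▸ hμ0)
    · refine Or.inr (le_trans (min_le_right _ _) ?_)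
      push_cast at h
      linarith
  have hw1' : ∀ r, σ ≤ r → r < R → 0 < w r ∧ w r ≤ 1 := by
    intro r h1 h2
    exact ⟨hw_pos r (le_trans hσ_pos.le h1) h2, hw_le_one r (le_trans hσ_pos.le h1) h2.le⟩
  have hM' : ∀ r, σ ≤ r → r < R → |deriv w r| ≤ |l| + 1 :=
    fun r h1 h2 => (hbounds r (lt_of_lt_of_le hρσ h1) h2).2
  obtain ⟨B, hB0, hB⟩ := leval_bound w μ (|l| + 1) σ R hσ_pos hμ0 (by positivity) hw1' hM' L hinv'
  -- pointwise bound near the boundary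
  set e : ℝ := α + j + 2 * μ with hedef
  have hGbound : ∀ r ∈ Set.Ioo σ R, G r ≤ (R ^ 4 * B ^ 2) * w r ^ e := by
    intro r hr
    have hr0 : 0 < r := lt_of_lt_of_le hσ_pos hr.1.le
    have hwpos : 0 < w r := hw_pos r hr0.le hr.2
    have hiD : |iteratedDeriv (j + 1) w r| ≤ B * w r ^ μ := by
      rw [hLeq r ⟨hr0, hr.2⟩]
      exact hB r hr.1.le hr.2
    have hsq : (iteratedDeriv (j + 1) w r) ^ 2 ≤ B ^ 2 * w r ^ (2 * μ) := by
      have h1 : (iteratedDeriv (j + 1) w r) ^ 2 = |iteratedDeriv (j + 1) w r| ^ 2 :=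
        (sq_abs _).symm
      rw [h1]
      calc |iteratedDeriv (j + 1) w r| ^ 2 ≤ (B * w r ^ μ) ^ 2 :=
            pow_le_pow_left₀ (abs_nonneg _) hiD 2
        _ = B ^ 2 * w r ^ (2 * μ) := by
            rw [mul_pow, ← Real.rpow_natCast (w r ^ μ) 2, ← Real.rpow_mul hwpos.le]
            congr 1
            push_cast
            ring
    calc G r ≤ w r ^ (α + j) * R ^ 4 * (B ^ 2 * w r ^ (2 * μ)) := by
          rw [hGdef]
          have hr4 : r ^ 4 ≤ R ^ 4 := pow_le_pow_left₀ hr0.le hr.2.le 4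
          have hwa : (0:ℝ) ≤ w r ^ (α + j) := Real.rpow_nonneg hwpos.le _
          have hsq0 : (0:ℝ) ≤ (iteratedDeriv (j + 1) w r) ^ 2 := sq_nonneg _
          calc w r ^ (α + j) * r ^ 4 * (iteratedDeriv (j + 1) w r) ^ 2
              ≤ w r ^ (α + j) * R ^ 4 * (iteratedDeriv (j + 1) w r) ^ 2 := by
                apply mul_le_mul_of_nonneg_right _ hsq0
                exact mul_le_mul_of_nonneg_left hr4 hwa
            _ ≤ w r ^ (α + j) * R ^ 4 * (B ^ 2 * w r ^ (2 * μ)) := by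
                apply mul_le_mul_of_nonneg_left hsq
                positivity
      _ = (R ^ 4 * B ^ 2) * w r ^ e := by
          rw [hedef, Real.rpow_add hwpos (α + (j:ℝ)) (2 * μ)]
          ring
  have hG_nonneg : ∀ r ∈ Set.Ioo (0:ℝ) R, 0 ≤ G r := by
    intro r hr
    rw [hGdef]
    have : (0:ℝ) ≤ w r ^ (α + j) := Real.rpow_nonneg (hw_pos r hr.1.le hr.2).le _
    positivity
  -- piece near zero
  have hpiece1 : IntegrableOn G (Set.Ioc 0 σ) := by
    set G' : ℝ → ℝ := fun r =>
      w r ^ (α + j) * r ^ 4 * (iteratedDerivWithin (j + 1) w (Set.Ico 0 R) r) ^ 2 with hG'def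
    have hsub : Set.Icc (0:ℝ) σ ⊆ Set.Ico 0 R := fun x hx => ⟨hx.1, lt_of_le_of_lt hx.2 hσ_lt⟩
    have hG'_cont : ContinuousOn G' (Set.Icc 0 σ) := by
      apply ContinuousOn.mul
      apply ContinuousOn.mul
      · apply ContinuousOn.rpow_const (hw_cont.mono (fun x hx => ⟨hx.1, (hsub hx).2.le⟩))
        intro x hx
        exact Or.inl (ne_of_gt (hw_pos x hx.1 (hsub hx).2))
      · exact (continuous_pow 4).continuousOn
      · exact ((hwithin_cont (j + 1)).mono hsub).pow 2
    have hint : IntegrableOn G' (Set.Icc 0 σ) :=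
      hG'_cont.integrableOn_compact isCompact_Icc
    apply (hint.mono_set Set.Ioc_subset_Icc_self).congr_fun _ measurableSet_Ioc
    intro x hx
    have hx' : x ∈ Set.Ioo (0:ℝ) R := ⟨hx.1, lt_of_le_of_lt hx.2 hσ_lt⟩
    rw [hG'def, hGdef]
    simp only
    rw [itDerivWithin_eq (j + 1) w hx']
  -- piece near the boundary
  have hpiece2 : IntegrableOn G (Set.Ioo σ R) := by
    have hmeas : AEStronglyMeasurable G (volume.restrict (Set.Ioo σ R)) :=
      (hG_cont.mono (fun x hx => ⟨lt_trans hσ_pos hx.1, hx.2⟩)).aestronglyMeasurable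
        measurableSet_Ioo
    have he1 : -1 < e := by
      rw [hedef, hμdef]
      rcases min_cases (0:ℝ) (α + 1 - j) with ⟨hm, _⟩ | ⟨hm, hmlt⟩
      · rw [hm]; have : (0:ℝ) ≤ j := Nat.cast_nonneg j; linarith
      · rw [hm]; linarith
    rcases le_or_gt 0 e with he | he
    · -- bounded case
      apply Integrable.mono' (g := fun _ => R ^ 4 * B ^ 2)
        (integrableOn_const measure_Ioo_lt_top.ne) hmeas
      rw [ae_restrict_iff' measurableSet_Ioo]
      apply Filter.Eventually.of_forall
      intro r hr
      have hr' : r ∈ Set.Ioo (0:ℝ) R := ⟨lt_trans hσ_pos hr.1, hr.2⟩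
      rw [Real.norm_eq_abs, abs_of_nonneg (hG_nonneg r hr')]
      calc G r ≤ (R ^ 4 * B ^ 2) * w r ^ e := hGbound r hr
        _ ≤ (R ^ 4 * B ^ 2) * 1 := by
            apply mul_le_mul_of_nonneg_left _ (by positivity)
            exact Real.rpow_le_one (hw_pos r hr'.1.le hr'.2).le
              (hw_le_one r hr'.1.le hr'.2.le) he
        _ = R ^ 4 * B ^ 2 := mul_one _
    · -- rpow-dominated case
      have hK0 : (0:ℝ) ≤ R ^ 4 * B ^ 2 * (-l / 2) ^ e := by
        have : (0:ℝ) < -l / 2 := by linarith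
        positivity
      have hii : IntervalIntegrable (fun x : ℝ => x ^ e) volume 0 (R - σ) :=
        intervalIntegral.intervalIntegrable_rpow' he1
      have hii2 : IntervalIntegrable (fun x : ℝ => (R - x) ^ e) volume σ R := by
        have h := hii.comp_sub_left R
        have h2 : IntervalIntegrable (fun x => (R - x) ^ e) volume R σ := by simpa using h
        exact h2.symm
      have hdom : IntegrableOn (fun x : ℝ => R ^ 4 * B ^ 2 * (-l / 2) ^ e * (R - x) ^ e)
          (Set.Ioo σ R) := by
        have h1 : IntegrableOn (fun x : ℝ => (R - x) ^ e) (Set.Ioc σ R) :=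
          (intervalIntegrable_iff_integrableOn_Ioc_of_le hσ_lt.le).1 hii2
        exact ((h1.mono_set Set.Ioo_subset_Ioc_self).const_mul _)
      apply Integrable.mono' hdom hmeas
      rw [ae_restrict_iff' measurableSet_Ioo]
      apply Filter.Eventually.of_forall
      intro r hr
      have hr' : r ∈ Set.Ioo (0:ℝ) R := ⟨lt_trans hσ_pos hr.1, hr.2⟩
      rw [Real.norm_eq_abs, abs_of_nonneg (hG_nonneg r hr')]
      have hRr : 0 < R - r := by linarith [hr.2]
      have hlpos : (0:ℝ) < -l / 2 := by linarith
      have hwe : w r ^ e ≤ (-l / 2) ^ e * (R - r) ^ e := by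
        have h1 : (0:ℝ) < (-l / 2) * (R - r) := by positivity
        have h2 : (-l / 2) * (R - r) ≤ w r := hlow r hr.1.le hr.2
        calc w r ^ e ≤ ((-l / 2) * (R - r)) ^ e :=
              Real.rpow_le_rpow_of_nonpos h1 h2 he.le
          _ = (-l / 2) ^ e * (R - r) ^ e := Real.mul_rpow hlpos.le hRr.le
      calc G r ≤ (R ^ 4 * B ^ 2) * w r ^ e := hGbound r hr
        _ ≤ (R ^ 4 * B ^ 2) * ((-l / 2) ^ e * (R - r) ^ e) := by
            apply mul_le_mul_of_nonneg_left hwe (by positivity)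
        _ = R ^ 4 * B ^ 2 * (-l / 2) ^ e * (R - r) ^ e := by ring
  -- combine
  have hcover : Set.Ioo (0:ℝ) R ⊆ Set.Ioc 0 σ ∪ Set.Ioo σ R := by
    intro x hx
    rcases le_or_gt x σ with h | h
    · exact Or.inl ⟨hx.1, h⟩
    · exact Or.inr ⟨h, hx.2⟩
  exact (hpiece1.union hpiece2).mono_set hcover
end

section
/- (Localized Hardy inequality near the origin) Let R > 0 and let c > 0 satisfy 2c < R. Then there exists a constant C > 0, independent of u, such that for every weakly differentiable u : (0,R) → ℝ with ∫₀^{2c} r⁴ u'(r)² dr < ∞ and ∫_c^{2c} r⁴ u(r)² dr < ∞, one has ∫₀^c r² u(r)² dr ≤ C ( ∫₀^{2c} r⁴ u'(r)² dr + ∫_c^{2c} r⁴ u(r)² dr ). -/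
/-!
Fix an anchor `s ∈ (c, 2c)` at which `s⁴ u(s)²` is at most its mean over `(c, 2c)`, and write
`u(r) = u(s) - ∫_r^s u'`. Cauchy–Schwarz against the weight `t³` gives
`(∫_r^s |u'|)² ≤ (2r²)⁻¹ ∫_r^s t³ u'²`; it is obtained by integrating `2|v| ≤ l t⁻³ + t³ v² / l`
and optimising in `l`. Hence `r² u(r)² ≤ 2 r² u(s)² + ∫_r^s t³ u'²`, and integrating over
`r ∈ (0, c)` and exchanging the order of integration bounds the last term by `∫_0^s t⁴ u'²`.
This gives the inequality with `C = 1 + 2 / c²`.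
-/

open MeasureTheory Set
open scoped ENNReal

lemma sq_le_mul_of_forall_two_mul_le {J p I : ℝ} (hJ : 0 ≤ J) (hp : 0 < p) (hI : 0 ≤ I)
    (h : ∀ l > 0, 2 * J ≤ l * p + I / l) : J ^ 2 ≤ p * I := by
  rcases hJ.eq_or_lt with rfl | hJ
  · simpa using mul_nonneg hp.le hI
  · have hl := h (J / p) (div_pos hJ hp)
    rw [div_mul_cancel₀ _ hp.ne', div_div_eq_mul_div] at hl
    have : J ≤ I * p / J := by linarith
    rw [le_div_iff₀ hJ] at this
    nlinarith

lemma integral_Ioc_inv_pow_three_le {r s : ℝ} (hr : 0 < r) (hrs : r ≤ s) :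
    ∫ t in Ioc r s, (t ^ 3)⁻¹ ≤ (2 * r ^ 2)⁻¹ := by
  have h0 : (0:ℝ) ∉ uIcc r s := by
    rw [uIcc_of_le hrs]; exact fun h => (h.1.trans_lt' hr).false
  have key := integral_zpow (a := r) (b := s) (n := -3) (Or.inr ⟨by norm_num, h0⟩)
  simp only [zpow_neg, zpow_ofNat] at key
  rw [← intervalIntegral.integral_of_le hrs, key]
  norm_num
  linarith [inv_nonneg.2 (sq_nonneg s)]

lemma two_mul_abs_le_inv_pow_three_add {t l : ℝ} (ht : 0 < t) (hl : 0 < l) (x : ℝ) :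
    2 * |x| ≤ l * (t ^ 3)⁻¹ + t ^ 3 * x ^ 2 / l := by
  have ht3 : 0 < t ^ 3 := by positivity
  rw [← sq_abs x]
  field_simp
  nlinarith [sq_nonneg (l - t ^ 3 * |x|)]

lemma exists_mem_Ioo_mul_le_setIntegral {f : ℝ → ℝ} {a b : ℝ} (hab : a < b)
    (hf : IntegrableOn f (Ioo a b)) : ∃ s ∈ Ioo a b, (b - a) * f s ≤ ∫ t in Ioo a b, f t := by
  obtain ⟨s, hs, h⟩ := exists_le_setAverage (by simp [hab]) (by simp) hf
  refine ⟨s, hs, ?_⟩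
  rwa [setAverage_eq, Real.volume_real_Ioo_of_le hab.le, smul_eq_mul, ← div_eq_inv_mul,
    le_div_iff₀' (sub_pos.2 hab)] at h

lemma integrable_and_integral_le_of_lintegral_ofReal_le {α : Type*} [MeasurableSpace α]
    {μ : Measure α} {f : α → ℝ} {M : ℝ} (hM : 0 ≤ M) (hf0 : 0 ≤ᵐ[μ] f)
    (hf : AEStronglyMeasurable f μ) (h : ∫⁻ x, ENNReal.ofReal (f x) ∂μ ≤ ENNReal.ofReal M) :
    Integrable f μ ∧ ∫ x, f x ∂μ ≤ M := by
  refine ⟨⟨hf, (hasFiniteIntegral_iff_ofReal hf0).2 (h.trans_lt ENNReal.ofReal_lt_top)⟩, ?_⟩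
  rw [integral_eq_lintegral_of_nonneg_ae hf0 hf]
  exact ENNReal.toReal_le_of_le_ofReal hM h

lemma IntegrableOn.inv_mul_of_subset_Ici {f : ℝ → ℝ} {S : Set ℝ} {r : ℝ} (hr : 0 < r)
    (hS : S ⊆ Ici r) (hSm : MeasurableSet S) (hf : IntegrableOn f S) :
    IntegrableOn (fun t => t⁻¹ * f t) S := by
  refine hf.bdd_mul (c := r⁻¹) measurable_inv.aestronglyMeasurable ?_
  filter_upwards [ae_restrict_mem hSm] with t ht
  have ht' : r ≤ t := hS ht
  rw [norm_inv, Real.norm_of_nonneg (hr.trans_le ht').le]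
  exact inv_anti₀ hr ht'

lemma lintegral_Ioi_lintegral_Ioc {g : ℝ → ℝ≥0∞} (hg : Measurable g) (a s : ℝ) :
    ∫⁻ r in Ioi a, ∫⁻ t in Ioc r s, g t = ∫⁻ t in Ioc a s, ENNReal.ofReal (t - a) * g t := by
  have hF : Measurable (Function.uncurry fun r t => (Ioi r).indicator g t) := by
    have : (Function.uncurry fun r t => (Ioi r).indicator g t) =
        {p : ℝ × ℝ | p.1 < p.2}.indicator (g ∘ Prod.snd) := by
      ext ⟨r, t⟩; simp [indicator]
    rw [this]
    exact (hg.comp measurable_snd).indicator (measurableSet_lt measurable_fst measurable_snd)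
  calc ∫⁻ r in Ioi a, ∫⁻ t in Ioc r s, g t
      = ∫⁻ r in Ioi a, ∫⁻ t in Ioc a s, (Ioi r).indicator g t := by
        refine setLIntegral_congr_fun measurableSet_Ioi fun r hr => ?_
        have hset : Ioi r ∩ Ioc a s = Ioc r s := by
          rw [← Ioi_inter_Iic, ← inter_assoc, Ioi_inter_Ioi, sup_eq_left.2 (le_of_lt hr),
            Ioi_inter_Iic]
        rw [lintegral_indicator measurableSet_Ioi, Measure.restrict_restrict measurableSet_Ioi,
          hset]
    _ = ∫⁻ t in Ioc a s, ∫⁻ r in Ioi a, (Ioi r).indicator g t :=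
        lintegral_lintegral_swap hF.aemeasurable
    _ = ∫⁻ t in Ioc a s, ENNReal.ofReal (t - a) * g t := by
        refine setLIntegral_congr_fun measurableSet_Ioc fun t ht => ?_
        have : (fun r => (Ioi r).indicator g t) = (Iio t).indicator fun _ => g t := by
          ext r; simp [indicator]
        rw [this, lintegral_indicator_const measurableSet_Iio,
          Measure.restrict_apply measurableSet_Iio, Iio_inter_Ioi, Real.volume_Ioo, mul_comm]

section WeightedCauchySchwarz

variable {v : ℝ → ℝ} {r s : ℝ}

lemma integrableOn_Ioc_inv_pow_three (hr : 0 < r) :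
    IntegrableOn (fun t => (t ^ 3)⁻¹) (Ioc r s) :=
  (ContinuousOn.integrableOn_Icc ((continuousOn_pow 3).inv₀ fun _ ht =>
    (pow_pos (hr.trans_le ht.1) 3).ne')).mono_set Ioc_subset_Icc_self

lemma integrableOn_Ioc_of_pow_three_mul_sq (hr : 0 < r)
    (hv : AEStronglyMeasurable v (volume.restrict (Ioc r s)))
    (hI : IntegrableOn (fun t => t ^ 3 * v t ^ 2) (Ioc r s)) :
    IntegrableOn v (Ioc r s) := by
  refine ((integrableOn_Ioc_inv_pow_three hr).add hI).mono' hv ?_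
  filter_upwards [ae_restrict_mem measurableSet_Ioc] with t ht
  have := two_mul_abs_le_inv_pow_three_add (hr.trans ht.1) one_pos (v t)
  simp only [one_mul, div_one] at this
  simp only [Real.norm_eq_abs, Pi.add_apply]
  linarith [abs_nonneg (v t)]

lemma sq_integral_Ioc_abs_le (hr : 0 < r) (hrs : r ≤ s)
    (hv : AEStronglyMeasurable v (volume.restrict (Ioc r s)))
    (hI : IntegrableOn (fun t => t ^ 3 * v t ^ 2) (Ioc r s)) :
    (∫ t in Ioc r s, |v t|) ^ 2 ≤ (2 * r ^ 2)⁻¹ * ∫ t in Ioc r s, t ^ 3 * v t ^ 2 := by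
  refine sq_le_mul_of_forall_two_mul_le (integral_nonneg fun t => abs_nonneg _)
    (by positivity) (setIntegral_nonneg measurableSet_Ioc fun t ht =>
      mul_nonneg (pow_nonneg (hr.trans ht.1).le 3) (sq_nonneg _)) fun l hl => ?_
  have hinv := integrableOn_Ioc_inv_pow_three (s := s) hr
  calc 2 * ∫ t in Ioc r s, |v t|
      = ∫ t in Ioc r s, 2 * |v t| := (integral_const_mul _ _).symm
    _ ≤ ∫ t in Ioc r s, (l * (t ^ 3)⁻¹ + t ^ 3 * v t ^ 2 / l) := by
      refine setIntegral_mono_on ?_ ((hinv.const_mul l).add (hI.div_const l)) measurableSet_Ioc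
        fun t ht => two_mul_abs_le_inv_pow_three_add (hr.trans ht.1) hl (v t)
      exact ((integrableOn_Ioc_of_pow_three_mul_sq hr hv hI).abs).const_mul 2
    _ = l * (∫ t in Ioc r s, (t ^ 3)⁻¹) + (∫ t in Ioc r s, t ^ 3 * v t ^ 2) / l := by
      rw [integral_add (hinv.const_mul l) (hI.div_const l), integral_const_mul, integral_div]
    _ ≤ l * (2 * r ^ 2)⁻¹ + (∫ t in Ioc r s, t ^ 3 * v t ^ 2) / l := by
      gcongr
      exact integral_Ioc_inv_pow_three_le hr hrs

end WeightedCauchySchwarz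

lemma sq_mul_sq_le_of_differentiableAt {u : ℝ → ℝ} {r s : ℝ} (hr : 0 < r) (hrs : r ≤ s)
    (hu : ∀ t ∈ Icc r s, DifferentiableAt ℝ u t)
    (hI : IntegrableOn (fun t => t ^ 3 * deriv u t ^ 2) (Ioc r s)) :
    r ^ 2 * u r ^ 2 ≤ 2 * r ^ 2 * u s ^ 2 + ∫ t in Ioc r s, t ^ 3 * deriv u t ^ 2 := by
  have hmeas : AEStronglyMeasurable (deriv u) (volume.restrict (Ioc r s)) :=
    (measurable_deriv u).aestronglyMeasurable
  have hint := integrableOn_Ioc_of_pow_three_mul_sq hr hmeas hI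
  have hftc : ∫ t in r..s, deriv u t = u s - u r :=
    intervalIntegral.integral_eq_sub_of_hasDerivAt
      (fun t ht => (hu t (uIcc_of_le hrs ▸ ht)).hasDerivAt)
      ((intervalIntegrable_iff_integrableOn_Ioc_of_le hrs).2 hint)
  set J := ∫ t in Ioc r s, |deriv u t|
  have hJ : |u s - u r| ≤ J := by
    rw [← hftc]
    exact (intervalIntegral.abs_integral_le_integral_abs hrs).trans_eq
      (intervalIntegral.integral_of_le hrs)
  have hJ2 := sq_integral_Ioc_abs_le hr hrs hmeas hI
  have : u r ^ 2 ≤ 2 * u s ^ 2 + 2 * J ^ 2 := by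
    nlinarith [sq_abs (u s - u r), abs_nonneg (u s - u r), sq_nonneg (u s + (u s - u r))]
  calc r ^ 2 * u r ^ 2 ≤ r ^ 2 * (2 * u s ^ 2 + 2 * J ^ 2) := by gcongr
    _ ≤ r ^ 2 * (2 * u s ^ 2 + 2 * ((2 * r ^ 2)⁻¹ * ∫ t in Ioc r s, t ^ 3 * deriv u t ^ 2)) := by
      gcongr
    _ = _ := by field_simp

section WeightedDerivative

variable {u : ℝ → ℝ} {b : ℝ}

lemma ofReal_sq_mul_sq_le (hu : DifferentiableOn ℝ u (Ioo 0 b))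
    (hA : IntegrableOn (fun t => t ^ 4 * deriv u t ^ 2) (Ioo 0 b))
    {r s : ℝ} (hr : 0 < r) (hrs : r ≤ s) (hsb : s < b) :
    ENNReal.ofReal (r ^ 2 * u r ^ 2) ≤
      ENNReal.ofReal (2 * r ^ 2 * u s ^ 2) +
        ∫⁻ t in Ioc r s, ENNReal.ofReal (t ^ 3 * deriv u t ^ 2) := by
  have hsub : Ioc r s ⊆ Ioo 0 b := fun t ht => ⟨hr.trans ht.1, ht.2.trans_lt hsb⟩
  have hI : IntegrableOn (fun t => t ^ 3 * deriv u t ^ 2) (Ioc r s) := by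
    refine (IntegrableOn.inv_mul_of_subset_Ici hr (fun t ht => ht.1.le) measurableSet_Ioc
      (hA.mono_set hsub)).congr_fun (fun t ht => ?_) measurableSet_Ioc
    field_simp [(hr.trans ht.1).ne']
  have hdiff : ∀ t ∈ Icc r s, DifferentiableAt ℝ u t := fun t ht =>
    hu.differentiableAt (isOpen_Ioo.mem_nhds ⟨hr.trans_le ht.1, ht.2.trans_lt hsb⟩)
  have hI0 : 0 ≤ᵐ[volume.restrict (Ioc r s)] fun t => t ^ 3 * deriv u t ^ 2 :=
    ae_restrict_of_forall_mem measurableSet_Ioc fun t ht => by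
      have := (hr.trans ht.1).le; positivity
  rw [← ofReal_integral_eq_lintegral_ofReal hI hI0,
    ← ENNReal.ofReal_add (by positivity) (integral_nonneg_of_ae hI0)]
  exact ENNReal.ofReal_le_ofReal (sq_mul_sq_le_of_differentiableAt hr hrs hdiff hI)

lemma lintegral_Ioo_sq_mul_sq_le (hu : DifferentiableOn ℝ u (Ioo 0 b))
    (hA : IntegrableOn (fun t => t ^ 4 * deriv u t ^ 2) (Ioo 0 b))
    {c s : ℝ} (hcs : c ≤ s) (hsb : s < b) :
    ∫⁻ r in Ioo 0 c, ENNReal.ofReal (r ^ 2 * u r ^ 2) ≤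
      ENNReal.ofReal (2 * c ^ 2 * u s ^ 2) * volume (Ioo 0 c) +
        ENNReal.ofReal (∫ t in Ioo 0 b, t ^ 4 * deriv u t ^ 2) :=
  calc ∫⁻ r in Ioo 0 c, ENNReal.ofReal (r ^ 2 * u r ^ 2)
      ≤ ∫⁻ r in Ioo 0 c, (ENNReal.ofReal (2 * c ^ 2 * u s ^ 2) +
          ∫⁻ t in Ioc r s, ENNReal.ofReal (t ^ 3 * deriv u t ^ 2)) := by
        refine setLIntegral_mono' measurableSet_Ioo fun r hr =>
          (ofReal_sq_mul_sq_le hu hA hr.1 (hr.2.le.trans hcs) hsb).trans ?_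
        have := hr.1.le
        gcongr
        exact hr.2.le
    _ = ENNReal.ofReal (2 * c ^ 2 * u s ^ 2) * volume (Ioo 0 c) +
          ∫⁻ r in Ioo 0 c, ∫⁻ t in Ioc r s, ENNReal.ofReal (t ^ 3 * deriv u t ^ 2) := by
        rw [lintegral_add_left measurable_const, setLIntegral_const]
    _ ≤ ENNReal.ofReal (2 * c ^ 2 * u s ^ 2) * volume (Ioo 0 c) +
          ∫⁻ r in Ioi 0, ∫⁻ t in Ioc r s, ENNReal.ofReal (t ^ 3 * deriv u t ^ 2) := by
        gcongr
        exact Ioo_subset_Ioi_self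
    _ = ENNReal.ofReal (2 * c ^ 2 * u s ^ 2) * volume (Ioo 0 c) +
          ∫⁻ t in Ioc 0 s, ENNReal.ofReal (t ^ 4 * deriv u t ^ 2) := by
        rw [lintegral_Ioi_lintegral_Ioc (by fun_prop)]
        congr 1
        refine setLIntegral_congr_fun measurableSet_Ioc fun t ht => ?_
        rw [sub_zero, ← ENNReal.ofReal_mul ht.1.le]
        ring_nf
    _ ≤ ENNReal.ofReal (2 * c ^ 2 * u s ^ 2) * volume (Ioo 0 c) +
          ∫⁻ t in Ioo 0 b, ENNReal.ofReal (t ^ 4 * deriv u t ^ 2) := by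
        gcongr
    _ = ENNReal.ofReal (2 * c ^ 2 * u s ^ 2) * volume (Ioo 0 c) +
          ENNReal.ofReal (∫ t in Ioo 0 b, t ^ 4 * deriv u t ^ 2) := by
        rw [ofReal_integral_eq_lintegral_ofReal hA (ae_of_all _ fun t => by positivity)]

end WeightedDerivative

theorem integral_Ioo_sq_mul_sq_le {u : ℝ → ℝ} {c : ℝ} (hc : 0 < c)
    (hu : DifferentiableOn ℝ u (Ioo 0 (2 * c)))
    (hA : IntegrableOn (fun r => r ^ 4 * deriv u r ^ 2) (Ioo 0 (2 * c)))
    (hB : IntegrableOn (fun r => r ^ 4 * u r ^ 2) (Ioo c (2 * c))) :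
    IntegrableOn (fun r => r ^ 2 * u r ^ 2) (Ioo 0 c) ∧
      ∫ r in Ioo 0 c, r ^ 2 * u r ^ 2 ≤
        (∫ r in Ioo 0 (2 * c), r ^ 4 * deriv u r ^ 2) +
          2 / c ^ 2 * ∫ r in Ioo c (2 * c), r ^ 4 * u r ^ 2 := by
  set A := ∫ r in Ioo 0 (2 * c), r ^ 4 * deriv u r ^ 2
  set B := ∫ r in Ioo c (2 * c), r ^ 4 * u r ^ 2
  have hA0 : 0 ≤ A := integral_nonneg fun r => by positivity
  obtain ⟨s, hs, hus⟩ : ∃ s ∈ Ioo c (2 * c), (2 * c - c) * (s ^ 4 * u s ^ 2) ≤ B :=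
    exists_mem_Ioo_mul_le_setIntegral (by linarith) hB
  have hanchor : ENNReal.ofReal (2 * c ^ 2 * u s ^ 2) * volume (Ioo 0 c) ≤
      ENNReal.ofReal (2 / c ^ 2 * B) := by
    rw [Real.volume_Ioo, sub_zero, ← ENNReal.ofReal_mul (by positivity)]
    refine ENNReal.ofReal_le_ofReal ?_
    have : c ^ 4 * u s ^ 2 ≤ s ^ 4 * u s ^ 2 := by gcongr; exact hs.1.le
    rw [div_mul_eq_mul_div, le_div_iff₀ (by positivity)]
    nlinarith [mul_le_mul_of_nonneg_left this hc.le]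
  have hlint : ∫⁻ r in Ioo 0 c, ENNReal.ofReal (r ^ 2 * u r ^ 2) ≤
      ENNReal.ofReal (A + 2 / c ^ 2 * B) := by
    rw [ENNReal.ofReal_add hA0 (by positivity), add_comm]
    exact (lintegral_Ioo_sq_mul_sq_le hu hA hs.1.le hs.2).trans (by gcongr)
  have hcont : ContinuousOn (fun r => r ^ 2 * u r ^ 2) (Ioo 0 c) :=
    (continuousOn_id.pow 2).mul ((hu.continuousOn.mono (Ioo_subset_Ioo_right (by linarith))).pow 2)
  exact integrable_and_integral_le_of_lintegral_ofReal_le (by positivity)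
    (ae_of_all _ fun r => by positivity) (hcont.aestronglyMeasurable measurableSet_Ioo) hlint

theorem localized_hardy_inequality_origin_general
    (R c : ℝ) (hc : 0 < c) (h2c : 2 * c < R) :
    ∃ C > (0:ℝ), ∀ u u' : ℝ → ℝ,
      (∀ r ∈ Set.Ioo (0:ℝ) R, HasDerivAt u (u' r) r) →
      MeasureTheory.IntegrableOn (fun r => r ^ 4 * (u' r) ^ 2) (Set.Ioo 0 (2 * c)) →
      MeasureTheory.IntegrableOn (fun r => r ^ 4 * (u r) ^ 2) (Set.Ioo c (2 * c)) →
      MeasureTheory.IntegrableOn (fun r => r ^ 2 * (u r) ^ 2) (Set.Ioo 0 c) ∧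
      (∫ r in Set.Ioo (0:ℝ) c, r ^ 2 * (u r) ^ 2) ≤
        C * ((∫ r in Set.Ioo (0:ℝ) (2 * c), r ^ 4 * (u' r) ^ 2)
          + ∫ r in Set.Ioo c (2 * c), r ^ 4 * (u r) ^ 2) := by
  refine ⟨1 + 2 / c ^ 2, by positivity, fun u u' hderiv hA hB => ?_⟩
  have hderiv' : ∀ r ∈ Ioo 0 (2 * c), HasDerivAt u (u' r) r := fun r hr =>
    hderiv r ⟨hr.1, hr.2.trans h2c⟩
  have hweight : EqOn (fun r => r ^ 4 * deriv u r ^ 2) (fun r => r ^ 4 * u' r ^ 2)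
      (Ioo 0 (2 * c)) := fun r hr => by simp only [(hderiv' r hr).deriv]
  obtain ⟨hint, hle⟩ := integral_Ioo_sq_mul_sq_le hc
    (fun r hr => (hderiv' r hr).differentiableAt.differentiableWithinAt)
    (hA.congr_fun hweight.symm measurableSet_Ioo) hB
  rw [setIntegral_congr_fun measurableSet_Ioo hweight] at hle
  refine ⟨hint, hle.trans ?_⟩
  have hA0 : 0 ≤ ∫ r in Ioo 0 (2 * c), r ^ 4 * u' r ^ 2 := integral_nonneg fun r => by positivity
  have hB0 : 0 ≤ ∫ r in Ioo c (2 * c), r ^ 4 * u r ^ 2 := integral_nonneg fun r => by positivity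
  have : 0 ≤ 2 / c ^ 2 := by positivity
  nlinarith

/-- Localized Hardy inequality near the origin:
`∫₀^c r² u² dr ≤ C (∫₀^{2c} r⁴ u'² dr + ∫_c^{2c} r⁴ u² dr)`. -/
theorem localized_hardy_inequality_origin
    (R c : ℝ) (hR : 0 < R) (hc : 0 < c) (h2c : 2 * c < R) :
    ∃ C > (0:ℝ), ∀ u u' : ℝ → ℝ,
      (∀ r ∈ Set.Ioo (0:ℝ) R, HasDerivAt u (u' r) r) →
      MeasureTheory.IntegrableOn (fun r => r ^ 4 * (u' r) ^ 2) (Set.Ioo 0 (2 * c)) →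
      MeasureTheory.IntegrableOn (fun r => r ^ 4 * (u r) ^ 2) (Set.Ioo c (2 * c)) →
      MeasureTheory.IntegrableOn (fun r => r ^ 2 * (u r) ^ 2) (Set.Ioo 0 c) ∧
      (∫ r in Set.Ioo (0:ℝ) c, r ^ 2 * (u r) ^ 2) ≤
        C * ((∫ r in Set.Ioo (0:ℝ) (2 * c), r ^ 4 * (u' r) ^ 2)
          + ∫ r in Set.Ioo c (2 * c), r ^ 4 * (u r) ^ 2) :=
  localized_hardy_inequality_origin_general R c hc h2c
end

section
/- (Hardy inequality near the vacuum boundary) Let 3 < α < 5, let w be a Lane-Emden enthalpy profile, let a > 1 be real, let c > 0 satisfy 2c < R, and let ψ : [0,R] → ℝ be a smooth cutoff with 0 ≤ ψ ≤ 1, ψ = 0 on [0, R−2c] and ψ = 1 on [R−c, R]. Then there exists a constant C > 0 (depending on w, a, ψ but not on v) such that for every weakly differentiable v : (0,R) → ℝ with finite right-hand side: ∫₀^R w^{a−2} (ψ(r) v(r))² dr ≤ C ( ∫₀^R w^a (ψ(r) v'(r))² dr + ∫₀^R w^a (ψ(r) v(r))² dr ). -/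
open MeasureTheory Real Filter Set
open Topology

private lemma hardy_aux_abs (x y : ℝ) : |2 * x * y| ≤ x ^ 2 + y ^ 2 :=
  abs_le.2 ⟨by nlinarith [sq_nonneg (x + y)], by nlinarith [sq_nonneg (x - y)]⟩

private lemma hardy_aux_ptB {d A X I₁ I₂ : ℝ} (hd : 0 < d) (hA : 0 ≤ A)
    (h1 : 0 ≤ I₁) (h2 : 0 ≤ I₂)
    (h : d * X ≤ A * I₂ + d * (A * I₂ + A * I₁)) : X ≤ (A / d + A) * (I₁ + I₂) := by
  rw [div_add' _ _ _ hd.ne', div_mul_eq_mul_div, le_div_iff₀ hd]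
  nlinarith

private lemma hardy_aux_abs2 (t : ℝ) : |t| ≤ 1 + t ^ 2 := by
  rcases abs_cases t with ⟨h1, _⟩ | ⟨h1, _⟩ <;> nlinarith [sq_nonneg (t - 1), sq_nonneg (t + 1)]

private lemma hardy_aux_core {K K' κ a : ℝ} (W W' V V' : ℝ)
    (hKeq : 2 * K = (a - 1) * κ) (hKpos : 0 < K) (hKK' : K * K' = 1)
    (ha : 1 < a) (hκ : 0 < κ) (hW : 0 < W) (hW' : W' ≤ -κ) :
    K * (W ^ (a - 2) * V ^ 2) ≤
      -(((a - 1) * W ^ (a - 2) * W') * V ^ 2 + W ^ (a - 1) * (2 * V * V'))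
        + K' * (W ^ a * V' ^ 2) := by
  have hX : W ^ (a - 1) * W ^ (a - 1) = W ^ (a - 2) * W ^ a := by
    rw [← Real.rpow_add hW, ← Real.rpow_add hW]; ring_nf
  set X2 := W ^ (a - 2) with hX2def
  set X1 := W ^ (a - 1) with hX1def
  set X0 := W ^ a with hX0def
  have hX2n : 0 ≤ X2 := Real.rpow_nonneg hW.le _
  have hX0p : 0 < X0 := Real.rpow_pos_of_pos hW _
  have step1 : 0 ≤ K * (X2 * V ^ 2) - 2 * (X1 * (V * V')) + K' * (X0 * V' ^ 2) := by
    have hsq := sq_nonneg (K * X1 * V - X0 * V')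
    have hexp : (K * X1 * V - X0 * V') ^ 2 =
        (K * X0) * (K * (X2 * V ^ 2) - 2 * (X1 * (V * V')) + K' * (X0 * V' ^ 2)) := by
      linear_combination (K ^ 2 * V ^ 2) * hX - (X0 ^ 2 * V' ^ 2) * hKK'
    rw [hexp] at hsq
    exact (mul_nonneg_iff_of_pos_left (mul_pos hKpos hX0p)).1 hsq
  have hW'mult : ((a - 1) * X2 * V ^ 2) * W' ≤ ((a - 1) * X2 * V ^ 2) * (-κ) :=
    mul_le_mul_of_nonneg_left hW'
      (mul_nonneg (mul_nonneg (by linarith) hX2n) (sq_nonneg V))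
  have hW'mult2 : ((a - 1) * X2 * V ^ 2) * W' ≤ -(2 * K) * (X2 * V ^ 2) := by
    refine le_trans hW'mult (le_of_eq ?_)
    linear_combination (X2 * V ^ 2) * hKeq
  nlinarith [step1, hW'mult2]

private lemma hardy_aux_div {m X2 W2 P : ℝ} (hm : 0 < m) (hX2 : 0 ≤ X2) (hP : 0 ≤ P)
    (hsq : m ^ 2 ≤ W2) : X2 * P ≤ (m ^ 2)⁻¹ * (X2 * W2 * P) := by
  have key : m ^ 2 * (X2 * P) ≤ X2 * W2 * P := by
    nlinarith [mul_le_mul_of_nonneg_right hsq (mul_nonneg hX2 hP)]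
  calc X2 * P = (m ^ 2)⁻¹ * (m ^ 2 * (X2 * P)) := by
        field_simp
    _ ≤ (m ^ 2)⁻¹ * (X2 * W2 * P) :=
        mul_le_mul_of_nonneg_left key (by positivity)

private lemma hardy_aux_final {M k W1 CB I₁ I₂ S0 SΛ X : ℝ} (hM : 0 ≤ M) (hk : 0 ≤ k)
    (hW1 : 0 ≤ W1) (hCB : 0 ≤ CB) (hI₁ : 0 ≤ I₁) (hI₂ : 0 ≤ I₂)
    (hX : X ≤ CB * (I₁ + I₂)) (hS0 : S0 ≤ M * I₂) (hSΛ : SΛ ≤ k * (W1 * X + k * I₁)) :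
    S0 + SΛ ≤ (M + k * (W1 * CB + k)) * (I₁ + I₂) := by
  nlinarith [mul_le_mul_of_nonneg_left hX (mul_nonneg hk hW1),
    mul_nonneg (mul_nonneg hk hk) hI₂, mul_nonneg hM hI₁, hS0, hSΛ]

set_option maxHeartbeats 1000000 in

/-- Hardy inequality near the vacuum boundary: with a cutoff `ψ` supported
near `r = R`, `∫₀^R w^{a−2} (ψ v)² dr ≤ C (∫₀^R w^a (ψ v')² dr + ∫₀^R w^a (ψ v)² dr)`. -/
theorem hardy_inequality_vacuum_boundary
    (α c R : ℝ) (hα : 3 < α) (hα' : α < 5) (hc : 0 < c) (hR : 0 < R)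
    (w : ℝ → ℝ)
    (hw_cont : ContinuousOn w (Set.Icc 0 R))
    (hw_smooth : ContDiffOn ℝ (⊤ : ℕ∞) w (Set.Ico 0 R))
    (hw0 : w 0 = 1) (hw'0 : deriv w 0 = 0)
    (hw_pos : ∀ r, 0 ≤ r → r < R → 0 < w r)
    (hwR : w R = 0)
    (hw_dec : ∀ r, 0 < r → r < R → deriv w r < 0)
    (hw_pv : ∃ w'R : ℝ, w'R < 0 ∧
      Filter.Tendsto (deriv w) (nhdsWithin R (Set.Iio R)) (nhds w'R))
    (hw_ode : ∀ r, 0 < r → r < R →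
      deriv (deriv w) r + (2 / r) * deriv w r + c * w r ^ α = 0)
    (a : ℝ) (ha : 1 < a)
    (c₀ : ℝ) (hc₀ : 0 < c₀) (h2c₀ : 2 * c₀ < R)
    (ψ : ℝ → ℝ) (hψ_smooth : ContDiff ℝ (⊤ : ℕ∞) ψ)
    (hψ01 : ∀ r, 0 ≤ ψ r ∧ ψ r ≤ 1)
    (hψ0 : ∀ r ∈ Set.Icc (0:ℝ) (R - 2 * c₀), ψ r = 0)
    (hψ1 : ∀ r ∈ Set.Icc (R - c₀) R, ψ r = 1) :
    ∃ C > (0:ℝ), ∀ v v' : ℝ → ℝ,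
      (∀ r ∈ Set.Ioo (0:ℝ) R, HasDerivAt v (v' r) r) →
      MeasureTheory.IntegrableOn (fun r => w r ^ a * (ψ r * v' r) ^ 2) (Set.Ioo 0 R) →
      MeasureTheory.IntegrableOn (fun r => w r ^ a * (ψ r * v r) ^ 2) (Set.Ioo 0 R) →
      MeasureTheory.IntegrableOn (fun r => w r ^ (a - 2) * (ψ r * v r) ^ 2)
        (Set.Ioo 0 R) ∧
      (∫ r in Set.Ioo (0:ℝ) R, w r ^ (a - 2) * (ψ r * v r) ^ 2) ≤
        C * ((∫ r in Set.Ioo (0:ℝ) R, w r ^ a * (ψ r * v' r) ^ 2)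
          + ∫ r in Set.Ioo (0:ℝ) R, w r ^ a * (ψ r * v r) ^ 2) := by
  classical
  obtain ⟨L, hL, hLtend⟩ := hw_pv
  set κ : ℝ := -L / 2 with hκdef
  have hκpos : 0 < κ := by simp only [hκdef]; linarith
  have hev : {r : ℝ | deriv w r < -κ} ∈ nhdsWithin R (Set.Iio R) :=
    hLtend.eventually_lt_const (by simp only [hκdef]; linarith)
  obtain ⟨l, hlR, hlsub⟩ := mem_nhdsLT_iff_exists_Ioo_subset.1 hev
  have hlR' : l < R := hlR
  -- choice of r₁, r₂
  set r₁ : ℝ := max ((l + R) / 2) (R - c₀ / 2) with hr₁def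
  have hr₁R : r₁ < R := by
    apply max_lt <;> [skip; skip] <;> linarith
  have hr₁l : l < r₁ := lt_of_lt_of_le (by linarith) (le_max_left _ _)
  have hr₁c₀ : R - c₀ < r₁ := lt_of_lt_of_le (by linarith) (le_max_right _ _)
  have hr₁pos : 0 < r₁ := lt_of_lt_of_le (by linarith) (le_max_right _ _)
  set r₂ : ℝ := (r₁ + R) / 2 with hr₂def
  have hr₁₂ : r₁ < r₂ := by simp only [hr₂def]; linarith
  have hr₂R : r₂ < R := by simp only [hr₂def]; linarith
  set d : ℝ := r₂ - r₁ with hddef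
  have hdpos : 0 < d := by simp only [hddef]; linarith
  -- derivative bound near R
  have hκ' : ∀ r, r₁ ≤ r → r < R → deriv w r ≤ -κ := fun r h1 h2 =>
    le_of_lt (hlsub ⟨lt_of_lt_of_le hr₁l h1, h2⟩)
  -- ψ = 1 on [r₁, R]
  have hψone : ∀ r, r₁ ≤ r → r ≤ R → ψ r = 1 := fun r h1 h2 =>
    hψ1 r ⟨by linarith, h2⟩
  -- w differentiability and continuity of deriv
  have hwdiff : ∀ r ∈ Set.Ioo (0:ℝ) R, HasDerivAt w (deriv w r) r := by
    intro r hr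
    have hmem : Set.Ico (0:ℝ) R ∈ nhds r :=
      mem_nhds_iff.2 ⟨Set.Ioo 0 R, Set.Ioo_subset_Ico_self, isOpen_Ioo, hr⟩
    exact ((hw_smooth.differentiableOn (by simp)).differentiableAt hmem).hasDerivAt
  have hw'cont : ContinuousOn (deriv w) (Set.Ioo 0 R) :=
    (hw_smooth.mono Set.Ioo_subset_Ico_self).continuousOn_deriv_of_isOpen isOpen_Ioo (by simp)
  -- minima of w
  have hwmin : ∀ p q : ℝ, 0 ≤ p → p ≤ q → q < R →
      ∃ m : ℝ, 0 < m ∧ ∀ r ∈ Set.Icc p q, m ≤ w r := by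
    intro p q hp hpq hq
    obtain ⟨x, hx, hmin⟩ := isCompact_Icc.exists_isMinOn (Set.nonempty_Icc.2 hpq)
      (hw_cont.mono (fun r hr => ⟨by linarith [hr.1], by linarith [hr.2]⟩))
    exact ⟨w x, hw_pos x (by linarith [hx.1]) (by linarith [hx.2]), fun r hr => hmin hr⟩
  obtain ⟨m₀, hm₀pos, hm₀⟩ := hwmin 0 r₁ le_rfl hr₁pos.le hr₁R
  obtain ⟨mJ, hmJpos, hmJ⟩ := hwmin r₁ r₂ hr₁pos.le hr₁₂.le hr₂R
  set K : ℝ := (a - 1) * κ / 2 with hKdef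
  have hKpos : 0 < K := by
    have : 0 < a - 1 := by linarith
    simp only [hKdef]; positivity
  set A : ℝ := (mJ ^ a)⁻¹ with hAdef
  have hmJa : 0 < mJ ^ a := Real.rpow_pos_of_pos hmJpos a
  have hApos : 0 < A := by simp only [hAdef]; positivity
  set CB : ℝ := A / d + A with hCBdef
  have hCBpos : 0 < CB := by positivity
  have hwr₁pos : 0 < w r₁ := hw_pos r₁ hr₁pos.le hr₁R
  set W1 : ℝ := w r₁ ^ (a - 1) with hW1def
  have hW1pos : 0 < W1 := Real.rpow_pos_of_pos hwr₁pos _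
  have hm₀sq : 0 < m₀ ^ 2 := by positivity
  set C : ℝ := (m₀ ^ 2)⁻¹ + K⁻¹ * (W1 * CB + K⁻¹) with hCdef
  have hCpos : 0 < C := by positivity
  refine ⟨C, hCpos, ?_⟩
  intro v v' hv hI₁ hI₂
  set u₁ : ℝ → ℝ := fun r => w r ^ a * (ψ r * v' r) ^ 2 with hu₁def
  set u₂ : ℝ → ℝ := fun r => w r ^ a * (ψ r * v r) ^ 2 with hu₂def
  set h : ℝ → ℝ := fun r => w r ^ (a - 2) * (ψ r * v r) ^ 2 with hhdef
  set I₁ : ℝ := ∫ r in Set.Ioo (0:ℝ) R, u₁ r with hI₁def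
  set I₂ : ℝ := ∫ r in Set.Ioo (0:ℝ) R, u₂ r with hI₂def
  have hu₁nonneg : ∀ r ∈ Set.Ioo (0:ℝ) R, 0 ≤ u₁ r := fun r hr =>
    mul_nonneg (Real.rpow_nonneg (hw_pos r hr.1.le hr.2).le _) (sq_nonneg _)
  have hu₂nonneg : ∀ r ∈ Set.Ioo (0:ℝ) R, 0 ≤ u₂ r := fun r hr =>
    mul_nonneg (Real.rpow_nonneg (hw_pos r hr.1.le hr.2).le _) (sq_nonneg _)
  have hhnonneg : ∀ r ∈ Set.Ioo (0:ℝ) R, 0 ≤ h r := fun r hr =>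
    mul_nonneg (Real.rpow_nonneg (hw_pos r hr.1.le hr.2).le _) (sq_nonneg _)
  have hI₁nonneg : 0 ≤ I₁ := setIntegral_nonneg measurableSet_Ioo hu₁nonneg
  have hI₂nonneg : 0 ≤ I₂ := setIntegral_nonneg measurableSet_Ioo hu₂nonneg
  have hvcont : ∀ p q : ℝ, 0 < p → q < R → ContinuousOn v (Set.Icc p q) := by
    intro p q hp hq r hr
    exact ((hv r ⟨lt_of_lt_of_le hp hr.1, lt_of_le_of_lt hr.2 hq⟩).continuousAt).continuousWithinAt
  have hv'aesm : ∀ S : Set ℝ, MeasurableSet S → S ⊆ Set.Ioo 0 R →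
      AEStronglyMeasurable v' (volume.restrict S) := by
    intro S hS hsub
    refine (measurable_deriv v).aestronglyMeasurable.congr ?_
    exact (ae_restrict_iff' hS).2 (ae_of_all _ fun r hr => (hv r (hsub hr)).deriv)
  have hsubIoo : ∀ p q : ℝ, r₁ ≤ p → q < R → Set.Ioc p q ⊆ Set.Ioo 0 R := by
    intro p q hp hq x hx
    exact ⟨lt_of_le_of_lt (le_trans hr₁pos.le hp) hx.1, lt_of_le_of_lt hx.2 hq⟩
  -- integrability of v'^2 on compact subintervals near R
  have hv'sq : ∀ p q : ℝ, r₁ ≤ p → q < R → IntegrableOn (fun r => v' r ^ 2) (Set.Ioc p q) := by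
    intro p q hp hq
    rcases le_or_gt p q with hpq | hpq
    · obtain ⟨m, hm, hmw⟩ := hwmin p q (le_trans hr₁pos.le hp) hpq hq
      have hsub := hsubIoo p q hp hq
      have hmes : AEStronglyMeasurable (fun r => v' r ^ 2) (volume.restrict (Set.Ioc p q)) := by
        have hm1 := hv'aesm _ measurableSet_Ioc hsub
        simpa [sq, Pi.mul_def] using hm1.mul hm1
      refine ((hI₁.mono_set hsub).const_mul ((m ^ a)⁻¹)).mono' hmes ?_
      refine (ae_restrict_iff' measurableSet_Ioc).2 (ae_of_all _ fun r hr => ?_)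
      have hψr : ψ r = 1 := hψone r (le_trans hp hr.1.le) (le_trans hr.2 hq.le)
      have hma : m ^ a ≤ w r ^ a := Real.rpow_le_rpow hm.le (hmw r ⟨hr.1.le, hr.2⟩) (by linarith)
      have hmapos : 0 < m ^ a := Real.rpow_pos_of_pos hm a
      rw [Real.norm_eq_abs, abs_of_nonneg (sq_nonneg _)]
      simp only [hu₁def, hψr, one_mul]
      calc v' r ^ 2 = (m ^ a)⁻¹ * (m ^ a * v' r ^ 2) := by field_simp
        _ ≤ (m ^ a)⁻¹ * (w r ^ a * v' r ^ 2) :=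
            mul_le_mul_of_nonneg_left
              (mul_le_mul_of_nonneg_right hma (sq_nonneg _)) (inv_nonneg.2 hmapos.le)
    · rw [Set.Ioc_eq_empty (by linarith)]; exact integrableOn_empty
  -- w^a * v'^2 agrees with u₁ near R
  have hwav' : ∀ p q : ℝ, r₁ ≤ p → q < R →
      IntegrableOn (fun r => w r ^ a * v' r ^ 2) (Set.Ioc p q) ∧
      (∫ r in Set.Ioc p q, w r ^ a * v' r ^ 2) ≤ I₁ := by
    intro p q hp hq
    have hsub := hsubIoo p q hp hq
    have hEq : Set.EqOn u₁ (fun r => w r ^ a * v' r ^ 2) (Set.Ioc p q) := fun r hr => by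
      simp only [hu₁def, hψone r (le_trans hp hr.1.le) (le_trans hr.2 hq.le), one_mul]
    constructor
    · exact (hI₁.mono_set hsub).congr_fun hEq measurableSet_Ioc
    · rw [← setIntegral_congr_fun measurableSet_Ioc hEq]
      exact setIntegral_mono_set hI₁
        ((ae_restrict_iff' measurableSet_Ioo).2 (ae_of_all _ hu₁nonneg)) hsub.eventuallyLE
  -- v^2 on J
  have hvsqJ : IntegrableOn (fun r => v r ^ 2) (Set.Ioc r₁ r₂) :=
    (((hvcont r₁ r₂ hr₁pos hr₂R).pow 2).integrableOn_Icc).mono_set Set.Ioc_subset_Icc_self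
  have hvsqJle : (∫ r in Set.Ioc r₁ r₂, v r ^ 2) ≤ A * I₂ := by
    have hptw : ∀ r ∈ Set.Ioc r₁ r₂, v r ^ 2 ≤ A * u₂ r := by
      intro r hr
      have hψr : ψ r = 1 := hψone r hr.1.le (le_trans hr.2 hr₂R.le)
      have hma : mJ ^ a ≤ w r ^ a :=
        Real.rpow_le_rpow hmJpos.le (hmJ r ⟨hr.1.le, hr.2⟩) (by linarith)
      simp only [hu₂def, hψr, one_mul, hAdef]
      calc v r ^ 2 = (mJ ^ a)⁻¹ * (mJ ^ a * v r ^ 2) := by field_simp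
        _ ≤ (mJ ^ a)⁻¹ * (w r ^ a * v r ^ 2) :=
            mul_le_mul_of_nonneg_left
              (mul_le_mul_of_nonneg_right hma (sq_nonneg _)) (inv_nonneg.2 hmJa.le)
    calc (∫ r in Set.Ioc r₁ r₂, v r ^ 2) ≤ ∫ r in Set.Ioc r₁ r₂, A * u₂ r :=
          setIntegral_mono_on hvsqJ
            ((hI₂.mono_set (hsubIoo r₁ r₂ le_rfl hr₂R)).const_mul A) measurableSet_Ioc hptw
      _ = A * ∫ r in Set.Ioc r₁ r₂, u₂ r := integral_const_mul A _
      _ ≤ A * I₂ := by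
          refine mul_le_mul_of_nonneg_left ?_ hApos.le
          exact setIntegral_mono_set hI₂
            ((ae_restrict_iff' measurableSet_Ioo).2 (ae_of_all _ hu₂nonneg))
            (hsubIoo r₁ r₂ le_rfl hr₂R).eventuallyLE
  have hv'sqJle : (∫ r in Set.Ioc r₁ r₂, v' r ^ 2) ≤ A * I₁ := by
    have hptw : ∀ r ∈ Set.Ioc r₁ r₂, v' r ^ 2 ≤ A * u₁ r := by
      intro r hr
      have hψr : ψ r = 1 := hψone r hr.1.le (le_trans hr.2 hr₂R.le)
      have hma : mJ ^ a ≤ w r ^ a :=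
        Real.rpow_le_rpow hmJpos.le (hmJ r ⟨hr.1.le, hr.2⟩) (by linarith)
      simp only [hu₁def, hψr, one_mul, hAdef]
      calc v' r ^ 2 = (mJ ^ a)⁻¹ * (mJ ^ a * v' r ^ 2) := by field_simp
        _ ≤ (mJ ^ a)⁻¹ * (w r ^ a * v' r ^ 2) :=
            mul_le_mul_of_nonneg_left
              (mul_le_mul_of_nonneg_right hma (sq_nonneg _)) (inv_nonneg.2 hmJa.le)
    calc (∫ r in Set.Ioc r₁ r₂, v' r ^ 2) ≤ ∫ r in Set.Ioc r₁ r₂, A * u₁ r :=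
          setIntegral_mono_on (hv'sq r₁ r₂ le_rfl hr₂R)
            ((hI₁.mono_set (hsubIoo r₁ r₂ le_rfl hr₂R)).const_mul A) measurableSet_Ioc hptw
      _ = A * ∫ r in Set.Ioc r₁ r₂, u₁ r := integral_const_mul A _
      _ ≤ A * I₁ := by
          refine mul_le_mul_of_nonneg_left ?_ hApos.le
          exact setIntegral_mono_set hI₁
            ((ae_restrict_iff' measurableSet_Ioo).2 (ae_of_all _ hu₁nonneg))
            (hsubIoo r₁ r₂ le_rfl hr₂R).eventuallyLE
  -- integrability of 2 v v'
  have hvv'int : ∀ p q : ℝ, r₁ ≤ p → q < R →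
      IntegrableOn (fun r => 2 * v r * v' r) (Set.Ioc p q) := by
    intro p q hp hq
    rcases le_or_gt p q with hpq | hpq
    · have hsub := hsubIoo p q hp hq
      have hvc : ContinuousOn v (Set.Icc p q) :=
        hvcont p q (lt_of_lt_of_le hr₁pos hp) hq
      have hvint : IntegrableOn (fun r => v r ^ 2) (Set.Ioc p q) :=
        ((hvc.pow 2).integrableOn_Icc).mono_set Set.Ioc_subset_Icc_self
      have hmes : AEStronglyMeasurable (fun r => 2 * v r * v' r)
          (volume.restrict (Set.Ioc p q)) := by
        have h1 : AEStronglyMeasurable (fun r => 2 * v r)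
            (volume.restrict (Set.Ioc p q)) :=
          ((continuousOn_const.mul hvc).mono Set.Ioc_subset_Icc_self).aestronglyMeasurable
            measurableSet_Ioc
        exact h1.mul (hv'aesm _ measurableSet_Ioc hsub)
      refine (hvint.add (hv'sq p q hp hq)).mono' hmes ?_
      refine (ae_restrict_iff' measurableSet_Ioc).2 (ae_of_all _ fun r hr => ?_)
      rw [Real.norm_eq_abs]
      exact hardy_aux_abs (v r) (v' r)
    · rw [Set.Ioc_eq_empty (by linarith)]; exact integrableOn_empty
  -- pointwise bound on v r₁ ^ 2
  have hQint : IntegrableOn (fun r => v r ^ 2 + v' r ^ 2) (Set.Ioc r₁ r₂) :=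
    hvsqJ.add (hv'sq r₁ r₂ le_rfl hr₂R)
  set Q : ℝ := ∫ r in Set.Ioc r₁ r₂, (v r ^ 2 + v' r ^ 2) with hQdef
  have hQle : Q ≤ A * I₂ + A * I₁ := by
    rw [hQdef, integral_add hvsqJ (hv'sq r₁ r₂ le_rfl hr₂R)]
    exact add_le_add hvsqJle hv'sqJle
  have hptB : v r₁ ^ 2 ≤ CB * (I₁ + I₂) := by
    have hFTCs : ∀ s ∈ Set.Ioc r₁ r₂, v r₁ ^ 2 ≤ v s ^ 2 + Q := by
      intro s hs
      have hsle : r₁ ≤ s := hs.1.le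
      have hsR : s < R := lt_of_le_of_lt hs.2 hr₂R
      have hder : ∀ r ∈ Set.uIcc r₁ s, HasDerivAt (fun r => v r ^ 2) (2 * v r * v' r) r := by
        intro r hr
        rw [Set.uIcc_of_le hsle] at hr
        have hrIoo : r ∈ Set.Ioo (0:ℝ) R :=
          ⟨lt_of_lt_of_le hr₁pos hr.1, lt_of_le_of_lt hr.2 hsR⟩
        have h2 := (hv r hrIoo).pow 2
        simpa [pow_one, mul_comm, mul_assoc, Pi.pow_def] using h2
      have hII : IntervalIntegrable (fun r => 2 * v r * v' r) volume r₁ s :=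
        (intervalIntegrable_iff_integrableOn_Ioc_of_le hsle).2 (hvv'int r₁ s le_rfl hsR)
      have hFTC := intervalIntegral.integral_eq_sub_of_hasDerivAt hder hII
      have habs : |∫ r in r₁..s, 2 * v r * v' r| ≤ ∫ r in r₁..s, |2 * v r * v' r| :=
        intervalIntegral.abs_integral_le_integral_abs hsle
      have habs2 : (∫ r in r₁..s, |2 * v r * v' r|) ≤ Q := by
        rw [intervalIntegral.integral_of_le hsle]
        calc (∫ r in Set.Ioc r₁ s, |2 * v r * v' r|)
            ≤ ∫ r in Set.Ioc r₁ s, (v r ^ 2 + v' r ^ 2) := by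
              refine setIntegral_mono_on ((hvv'int r₁ s le_rfl hsR).abs)
                (hQint.mono_set (Set.Ioc_subset_Ioc_right hs.2)) measurableSet_Ioc
                fun r hr => ?_
              exact hardy_aux_abs (v r) (v' r)
          _ ≤ Q := by
              refine setIntegral_mono_set hQint ?_
                (Set.Ioc_subset_Ioc_right hs.2).eventuallyLE
              refine (ae_restrict_iff' measurableSet_Ioc).2 (ae_of_all _ fun r hr => ?_)
              positivity
      linarith [hFTC, habs, habs2, neg_abs_le (∫ r in r₁..s, 2 * v r * v' r)]
    have hconst : ∀ z : ℝ, (∫ _ in Set.Ioc r₁ r₂, z) = d * z := by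
      intro z
      rw [setIntegral_const]
      simp [Real.volume_Ioc, ENNReal.toReal_ofReal hdpos.le, smul_eq_mul, hddef, hr₁₂.le]
    have hmono := setIntegral_mono_on
      (integrableOn_const (μ := volume) (s := Set.Ioc r₁ r₂) (C := v r₁ ^ 2) measure_Ioc_lt_top.ne)
      (hvsqJ.add (integrableOn_const (μ := volume) (s := Set.Ioc r₁ r₂) (C := Q) measure_Ioc_lt_top.ne))
      measurableSet_Ioc hFTCs
    simp only [Pi.add_apply] at hmono
    rw [hconst, integral_add hvsqJ (integrableOn_const (μ := volume) (s := Set.Ioc r₁ r₂) (C := Q) measure_Ioc_lt_top.ne),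
      hconst] at hmono
    have hfin : d * v r₁ ^ 2 ≤ A * I₂ + d * (A * I₂ + A * I₁) := by
      have := mul_le_mul_of_nonneg_left hQle hdpos.le
      linarith [hvsqJle]
    rw [hCBdef]
    exact hardy_aux_ptB hdpos hApos.le hI₁nonneg hI₂nonneg hfin
  -- Step C : Hardy estimate on (r₁, s]
  have hKK' : K * K⁻¹ = 1 := mul_inv_cancel₀ hKpos.ne'
  set Λ : ℝ := K⁻¹ * (W1 * v r₁ ^ 2 + K⁻¹ * I₁) with hΛdef
  have hstepC : ∀ s : ℝ, r₁ < s → s < R →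
      IntegrableOn h (Set.Ioc r₁ s) ∧ (∫ r in Set.Ioc r₁ s, h r) ≤ Λ := by
    intro s hs1 hs2
    have hssub : Set.Ioc r₁ s ⊆ Set.Ioo 0 R := hsubIoo r₁ s le_rfl hs2
    have hIccsub : Set.Icc r₁ s ⊆ Set.Ioo 0 R := fun x hx =>
      ⟨lt_of_lt_of_le hr₁pos hx.1, lt_of_le_of_lt hx.2 hs2⟩
    set G : ℝ → ℝ := fun r => w r ^ (a - 1) * v r ^ 2 with hGdef
    set G' : ℝ → ℝ := fun r => ((a - 1) * w r ^ (a - 2) * deriv w r) * v r ^ 2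
      + w r ^ (a - 1) * (2 * v r * v' r) with hG'def
    have hwcont' : ContinuousOn w (Set.Icc r₁ s) :=
      hw_cont.mono fun x hx => ⟨le_trans hr₁pos.le hx.1, le_trans hx.2 hs2.le⟩
    have hwne : ∀ x ∈ Set.Icc r₁ s, w x ≠ 0 := fun x hx =>
      (hw_pos x (le_trans hr₁pos.le hx.1) (lt_of_le_of_lt hx.2 hs2)).ne'
    have hvc : ContinuousOn v (Set.Icc r₁ s) := hvcont r₁ s hr₁pos hs2
    have hGderiv : ∀ r ∈ Set.uIcc r₁ s, HasDerivAt G (G' r) r := by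
      intro r hr
      rw [Set.uIcc_of_le hs1.le] at hr
      have hrIoo := hIccsub hr
      have hwr := hw_pos r hrIoo.1.le hrIoo.2
      have h1 : HasDerivAt (fun r => w r ^ (a - 1))
          ((a - 1) * w r ^ (a - 2) * deriv w r) r := by
        have h0 := (hwdiff r hrIoo).rpow_const (p := a - 1) (Or.inl hwr.ne')
        rw [show a - 1 - 1 = a - 2 by ring] at h0
        convert h0 using 1
        ring
      have h2 : HasDerivAt (fun r => v r ^ 2) (2 * v r * v' r) r := by
        have h0 := (hv r hrIoo).pow 2
        simpa [pow_one, mul_comm, mul_assoc, Pi.pow_def] using h0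
      simpa [hGdef, hG'def, mul_comm, mul_assoc, mul_left_comm, Pi.mul_def] using h1.mul h2
    -- integrability of G'
    have hf₁int : IntegrableOn
        (fun r => ((a - 1) * w r ^ (a - 2) * deriv w r) * v r ^ 2) (Set.Ioc r₁ s) := by
      have hcont : ContinuousOn
          (fun r => ((a - 1) * w r ^ (a - 2) * deriv w r) * v r ^ 2) (Set.Icc r₁ s) :=
        (((continuousOn_const.mul (hwcont'.rpow_const fun x hx => Or.inl (hwne x hx))).mul
          (hw'cont.mono hIccsub)).mul (hvc.pow 2))
      exact hcont.integrableOn_Icc.mono_set Set.Ioc_subset_Icc_self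
    have hf₂cont : ContinuousOn (fun r => w r ^ (a - 1) * (2 * v r)) (Set.Icc r₁ s) :=
      (hwcont'.rpow_const fun x hx => Or.inl (hwne x hx)).mul (continuousOn_const.mul hvc)
    obtain ⟨B, hB⟩ := isCompact_Icc.exists_bound_of_continuousOn hf₂cont
    have hf₂int : IntegrableOn
        (fun r => w r ^ (a - 1) * (2 * v r * v' r)) (Set.Ioc r₁ s) := by
      have hmes : AEStronglyMeasurable (fun r => w r ^ (a - 1) * (2 * v r * v' r))
          (volume.restrict (Set.Ioc r₁ s)) := by
        have h1 := ((hf₂cont.mono Set.Ioc_subset_Icc_self).aestronglyMeasurable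
          measurableSet_Ioc).mul (hv'aesm _ measurableSet_Ioc hssub)
        refine h1.congr (ae_of_all _ fun r => by simp only [Pi.mul_apply]; ring)
      have hgint : IntegrableOn (fun r => |B| * (1 + v' r ^ 2)) (Set.Ioc r₁ s) :=
        ((integrableOn_const (μ := volume) (s := Set.Ioc r₁ s) (C := (1:ℝ)) measure_Ioc_lt_top.ne).add
          (hv'sq r₁ s le_rfl hs2)).const_mul |B|
      refine hgint.mono' hmes ?_
      refine (ae_restrict_iff' measurableSet_Ioc).2 (ae_of_all _ fun r hr => ?_)
      have hBr := hB r (Set.Ioc_subset_Icc_self hr)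
      rw [Real.norm_eq_abs] at hBr ⊢
      calc |w r ^ (a - 1) * (2 * v r * v' r)| = |w r ^ (a - 1) * (2 * v r)| * |v' r| := by
            rw [← abs_mul]; ring_nf
        _ ≤ |B| * (1 + v' r ^ 2) := by
            refine mul_le_mul (le_trans hBr (le_abs_self B)) (hardy_aux_abs2 _)
              (abs_nonneg _) (abs_nonneg _)
    have hG'intOn : IntegrableOn G' (Set.Ioc r₁ s) := by
      have := hf₁int.add hf₂int
      exact this
    have hG'II : IntervalIntegrable G' volume r₁ s :=
      (intervalIntegrable_iff_integrableOn_Ioc_of_le hs1.le).2 hG'intOn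
    have hFTC2 : (∫ r in Set.Ioc r₁ s, G' r) = G s - G r₁ := by
      rw [← intervalIntegral.integral_of_le hs1.le]
      exact intervalIntegral.integral_eq_sub_of_hasDerivAt hGderiv hG'II
    -- pointwise inequality
    have hPW : ∀ r ∈ Set.Ioc r₁ s, K * (w r ^ (a - 2) * v r ^ 2) ≤
        -G' r + K⁻¹ * (w r ^ a * v' r ^ 2) := by
      intro r hr
      have hrIoo := hssub hr
      exact hardy_aux_core (w r) (deriv w r) (v r) (v' r)
        (by rw [hKdef]; ring) hKpos hKK' ha hκpos (hw_pos r hrIoo.1.le hrIoo.2)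
        (hκ' r hr.1.le (lt_of_le_of_lt hr.2 hs2))
    have hLHSint : IntegrableOn (fun r => w r ^ (a - 2) * v r ^ 2) (Set.Ioc r₁ s) :=
      (((hwcont'.rpow_const fun x hx => Or.inl (hwne x hx)).mul
        (hvc.pow 2)).integrableOn_Icc).mono_set Set.Ioc_subset_Icc_self
    have hRHSint : IntegrableOn (fun r => -G' r + K⁻¹ * (w r ^ a * v' r ^ 2))
        (Set.Ioc r₁ s) :=
      hG'intOn.neg.add ((hwav' r₁ s le_rfl hs2).1.const_mul K⁻¹)
    have hG'neg : IntegrableOn (fun r => -G' r) (Set.Ioc r₁ s) := hG'intOn.neg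
    have hmono := setIntegral_mono_on (hLHSint.const_mul K) hRHSint measurableSet_Ioc hPW
    rw [integral_add hG'neg ((hwav' r₁ s le_rfl hs2).1.const_mul K⁻¹),
      integral_neg, hFTC2, integral_const_mul, integral_const_mul] at hmono
    have hGs : 0 ≤ G s :=
      mul_nonneg (Real.rpow_nonneg (hw_pos s (lt_of_lt_of_le hr₁pos hs1.le).le hs2).le _)
        (sq_nonneg _)
    have hGr₁ : G r₁ = W1 * v r₁ ^ 2 := by simp [hGdef, hW1def]
    have hkey : K * (∫ r in Set.Ioc r₁ s, w r ^ (a - 2) * v r ^ 2) ≤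
        W1 * v r₁ ^ 2 + K⁻¹ * I₁ := by
      have hv'le := (hwav' r₁ s le_rfl hs2).2
      have hKinv : (0:ℝ) ≤ K⁻¹ := inv_nonneg.2 hKpos.le
      have h2 := mul_le_mul_of_nonneg_left hv'le hKinv
      linarith [hmono, hGs, hGr₁, h2]
    have hEqh : Set.EqOn h (fun r => w r ^ (a - 2) * v r ^ 2) (Set.Ioc r₁ s) := by
      intro r hr
      simp only [hhdef, hψone r hr.1.le (le_trans hr.2 hs2.le), one_mul]
    refine ⟨hLHSint.congr_fun hEqh.symm measurableSet_Ioc, ?_⟩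
    rw [setIntegral_congr_fun measurableSet_Ioc hEqh, hΛdef]
    calc (∫ r in Set.Ioc r₁ s, w r ^ (a - 2) * v r ^ 2)
        = K⁻¹ * (K * ∫ r in Set.Ioc r₁ s, w r ^ (a - 2) * v r ^ 2) := by
          rw [← mul_assoc, inv_mul_cancel₀ hKpos.ne', one_mul]
      _ ≤ K⁻¹ * (W1 * v r₁ ^ 2 + K⁻¹ * I₁) :=
          mul_le_mul_of_nonneg_left hkey (inv_nonneg.2 hKpos.le)
  -- limit s → R
  set b : ℕ → ℝ := fun n => R - (R - r₁) / (n + 2) with hbdef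
  have hb1 : ∀ n : ℕ, r₁ < b n ∧ b n < R := by
    intro n
    simp only [hbdef]
    have h2 : (0:ℝ) < (n:ℝ) + 2 := by positivity
    constructor
    · have hn0 : (0:ℝ) ≤ (n:ℝ) := Nat.cast_nonneg n
      have h3 : (R - r₁) / ((n:ℝ) + 2) < R - r₁ :=
        div_lt_self (by linarith) (by linarith)
      linarith
    · have h4 : 0 < (R - r₁) / ((n:ℝ) + 2) := div_pos (by linarith) h2
      linarith
  have hbmono : Monotone b := by
    intro m n hmn
    simp only [hbdef]
    have hle : ((m:ℝ) + 2) ≤ ((n:ℝ) + 2) := by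
      have := (Nat.cast_le (α := ℝ)).2 hmn; linarith
    have hdiv : (R - r₁) / ((n:ℝ) + 2) ≤ (R - r₁) / ((m:ℝ) + 2) := by
      gcongr
    linarith
  have hbtend : Tendsto b atTop (𝓝 R) := by
    have hden : Tendsto (fun n : ℕ => ((n:ℝ) + 2)) atTop atTop :=
      tendsto_atTop_add_const_right _ 2 tendsto_natCast_atTop_atTop
    have h1 : Tendsto (fun n : ℕ => (R - r₁) / ((n:ℝ) + 2)) atTop (𝓝 0) :=
      Tendsto.div_atTop tendsto_const_nhds hden
    have h2 := (tendsto_const_nhds (x := R) (f := atTop (α := ℕ))).sub h1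
    simpa using h2
  have hIntIocR : IntegrableOn h (Set.Ioc r₁ R) := by
    refine integrableOn_Ioc_of_intervalIntegral_norm_bounded_right (I := Λ)
      (fun n => (hstepC (b n) (hb1 n).1 (hb1 n).2).1) hbtend
      (Eventually.of_forall fun n => ?_)
    have hEq : Set.EqOn (fun x => ‖h x‖) h (Set.Ioc r₁ (b n)) := fun x hx =>
      Real.norm_of_nonneg (hhnonneg x (hsubIoo r₁ (b n) le_rfl (hb1 n).2 hx))
    rw [setIntegral_congr_fun measurableSet_Ioc hEq]
    exact (hstepC (b n) (hb1 n).1 (hb1 n).2).2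
  have hIntIooR : IntegrableOn h (Set.Ioo r₁ R) := hIntIocR.mono_set Set.Ioo_subset_Ioc_self
  have hUnion : (⋃ n : ℕ, Set.Ioc r₁ (b n)) = Set.Ioo r₁ R := by
    ext x
    simp only [Set.mem_iUnion, Set.mem_Ioc, Set.mem_Ioo]
    constructor
    · rintro ⟨n, hx1, hx2⟩
      exact ⟨hx1, lt_of_le_of_lt hx2 (hb1 n).2⟩
    · rintro ⟨hx1, hx2⟩
      obtain ⟨n, hn⟩ := exists_nat_ge ((R - r₁) / (R - x))
      refine ⟨n, hx1, ?_⟩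
      simp only [hbdef]
      have hRx : 0 < R - x := by linarith
      have h2 : (0:ℝ) < (n:ℝ) + 2 := by positivity
      have h3 : (R - r₁) / (R - x) ≤ (n:ℝ) + 2 := le_trans hn (by linarith)
      have h4 : R - r₁ ≤ ((n:ℝ) + 2) * (R - x) := by
        rw [div_le_iff₀ hRx] at h3
        linarith
      have h5 : (R - r₁) / ((n:ℝ) + 2) ≤ R - x := by
        rw [div_le_iff₀ h2, mul_comm]
        exact h4
      linarith
  have hlimle : (∫ r in Set.Ioo r₁ R, h r) ≤ Λ := by
    have hintU : IntegrableOn h (⋃ n : ℕ, Set.Ioc r₁ (b n)) := by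
      rw [hUnion]; exact hIntIooR
    have htend := tendsto_setIntegral_of_monotone (f := h) (μ := volume)
      (fun n : ℕ => measurableSet_Ioc)
      (fun m n hmn => Set.Ioc_subset_Ioc_right (hbmono hmn)) hintU
    rw [hUnion] at htend
    exact le_of_tendsto' htend fun n => (hstepC (b n) (hb1 n).1 (hb1 n).2).2
  -- region (0, r₁]
  have hsub0 : Set.Ioc 0 r₁ ⊆ Set.Ioo (0:ℝ) R := fun x hx =>
    ⟨hx.1, lt_of_le_of_lt hx.2 hr₁R⟩
  have hptw0 : ∀ r ∈ Set.Ioc (0:ℝ) r₁, h r ≤ (m₀ ^ 2)⁻¹ * u₂ r := by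
    intro r hr
    have hrIoo := hsub0 hr
    have hwr : 0 < w r := hw_pos r hrIoo.1.le hrIoo.2
    have hm : m₀ ≤ w r := hm₀ r ⟨hr.1.le, hr.2⟩
    have hsplit : w r ^ a = w r ^ (a - 2) * w r ^ (2:ℕ) := by
      rw [← Real.rpow_natCast (w r) 2, ← Real.rpow_add hwr]
      norm_num
    have hsq : m₀ ^ 2 ≤ w r ^ (2:ℕ) := pow_le_pow_left₀ hm₀pos.le hm 2
    simp only [hhdef, hu₂def]
    rw [hsplit]
    have := hardy_aux_div (X2 := w r ^ (a - 2)) (P := (ψ r * v r) ^ 2)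
      hm₀pos (Real.rpow_nonneg hwr.le _) (sq_nonneg _) hsq
    linarith [this]
  have hcont0 : ContinuousOn h (Set.Ioc 0 r₁) := by
    have hwc : ContinuousOn w (Set.Ioc 0 r₁) :=
      hw_cont.mono fun x hx => ⟨hx.1.le, le_trans hx.2 hr₁R.le⟩
    have hwne : ∀ x ∈ Set.Ioc (0:ℝ) r₁, w x ≠ 0 := fun x hx =>
      (hw_pos x hx.1.le (lt_of_le_of_lt hx.2 hr₁R)).ne'
    have hvcont0 : ContinuousOn v (Set.Ioc 0 r₁) := fun x hx =>
      ((hv x (hsub0 hx)).continuousAt).continuousWithinAt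
    simp only [hhdef]
    exact (hwc.rpow_const fun x hx => Or.inl (hwne x hx)).mul
      ((hψ_smooth.continuous.continuousOn.mul hvcont0).pow 2)
  have hInt0 : IntegrableOn h (Set.Ioc 0 r₁) := by
    refine ((hI₂.mono_set hsub0).const_mul ((m₀ ^ 2)⁻¹)).mono'
      (hcont0.aestronglyMeasurable measurableSet_Ioc) ?_
    refine (ae_restrict_iff' measurableSet_Ioc).2 (ae_of_all _ fun r hr => ?_)
    rw [Real.norm_of_nonneg (hhnonneg r (hsub0 hr))]
    exact hptw0 r hr
  have hInt0le : (∫ r in Set.Ioc (0:ℝ) r₁, h r) ≤ (m₀ ^ 2)⁻¹ * I₂ := by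
    calc (∫ r in Set.Ioc (0:ℝ) r₁, h r) ≤ ∫ r in Set.Ioc (0:ℝ) r₁, (m₀ ^ 2)⁻¹ * u₂ r :=
          setIntegral_mono_on hInt0 ((hI₂.mono_set hsub0).const_mul _)
            measurableSet_Ioc hptw0
      _ = (m₀ ^ 2)⁻¹ * ∫ r in Set.Ioc (0:ℝ) r₁, u₂ r := integral_const_mul _ _
      _ ≤ (m₀ ^ 2)⁻¹ * I₂ := by
          refine mul_le_mul_of_nonneg_left ?_ (by positivity)
          exact setIntegral_mono_set hI₂
            ((ae_restrict_iff' measurableSet_Ioo).2 (ae_of_all _ hu₂nonneg))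
            hsub0.eventuallyLE
  -- combine
  have hsetEq : Set.Ioc 0 r₁ ∪ Set.Ioo r₁ R = Set.Ioo (0:ℝ) R :=
    Set.Ioc_union_Ioo_eq_Ioo hr₁pos.le hr₁R
  have hdisj : Disjoint (Set.Ioc (0:ℝ) r₁) (Set.Ioo r₁ R) := by
    rw [Set.disjoint_left]
    rintro x hx1 hx2
    exact absurd hx1.2 (not_le.2 hx2.1)
  have hIntAll : IntegrableOn h (Set.Ioo (0:ℝ) R) := by
    rw [← hsetEq]
    exact hInt0.union hIntIooR
  refine ⟨hIntAll, ?_⟩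
  have hsplitInt : (∫ r in Set.Ioo (0:ℝ) R, h r) =
      (∫ r in Set.Ioc (0:ℝ) r₁, h r) + ∫ r in Set.Ioo r₁ R, h r := by
    rw [← hsetEq, setIntegral_union hdisj measurableSet_Ioo hInt0 hIntIooR]
  rw [hsplitInt, hCdef]
  rw [hΛdef] at hlimle
  exact hardy_aux_final (by positivity) (inv_nonneg.2 hKpos.le) hW1pos.le hCBpos.le
    hI₁nonneg hI₂nonneg hptB hInt0le hlimle
end
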